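/- arXiv:1706.09914 — 4 statements merged into one kernel-verified Lean document; each statement's English description precedes it below -/
import Mathlib

section
/- For every r ∈ 𝒮, the sequence F(r) = (F_j(r))_{j∈ℕ₀} belongs to ℓ¹, the total sum satisfies Σ_{j=0}^∞ F_j(r) = 0, and moreover sup_{r∈𝒮} ‖F(r)‖₁ < ∞. -/
noncomputable section

open scoped BigOperators

/-- Tail sum `Σ_{m=j+1}^∞ r m`. -/
def tsumTail (r : ℕ → ℝ) (j : ℕ) : ℝ := ∑' m : ℕ, r (j + 1 + m)

/-- Membership in `𝒮`: nonnegative summable sequences with total mass 1. -/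
def memS (r : ℕ → ℝ) : Prop := (∀ j, 0 ≤ r j) ∧ Summable r ∧ ∑' j, r j = 1

lemma tsumTail_eq {r : ℕ → ℝ} (h : memS r) (j : ℕ) :
    tsumTail r j = 1 - ∑ m ∈ Finset.range (j + 1), r m := by
  have h1 : ∑ i ∈ Finset.range (j+1), r i + ∑' i, r (i + (j+1)) = ∑' i, r i :=
    Summable.sum_add_tsum_nat_add (j+1) h.2.1
  rw [h.2.2] at h1
  have he : tsumTail r j = ∑' m, r (m + (j + 1)) :=
    tsum_congr fun m => by rw [Nat.add_comm]
  rw [he]; linarith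

lemma memS.partial_le_one {r : ℕ → ℝ} (h : memS r) (n : ℕ) :
    ∑ m ∈ Finset.range n, r m ≤ 1 := by
  have := Summable.sum_le_tsum (Finset.range n) (fun m _ => h.1 m) h.2.1
  rwa [h.2.2] at this

lemma memS.r_le_one {r : ℕ → ℝ} (h : memS r) (i : ℕ) : r i ≤ 1 := by
  have := Summable.le_tsum h.2.1 i (fun m _ => h.1 m)
  rwa [h.2.2] at this

lemma memS.tail_nonneg {r : ℕ → ℝ} (h : memS r) (j : ℕ) : 0 ≤ tsumTail r j := by
  rw [tsumTail_eq h]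
  linarith [h.partial_le_one (j+1)]

lemma memS.tail_le_one {r : ℕ → ℝ} (h : memS r) (j : ℕ) : tsumTail r j ≤ 1 := by
  rw [tsumTail_eq h]
  have : 0 ≤ ∑ m ∈ Finset.range (j+1), r m := Finset.sum_nonneg fun m _ => h.1 m
  linarith

/-- The function `ζ̄(j, r)`. -/
def zbar (L k : ℕ) (j : ℕ) (r : ℕ → ℝ) : ℝ :=
  ∑ i₁ ∈ Finset.range k,
    ((∑ m ∈ Finset.range j, r m) ^ i₁ / (i₁.factorial : ℝ)) *
      ∑ i₂ ∈ Finset.Icc 1 (L - i₁),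
        (min i₂ (k - i₁) : ℝ) * (r j ^ i₂ / (i₂.factorial : ℝ)) *
          ((tsumTail r j) ^ (L - i₁ - i₂) / ((L - i₁ - i₂).factorial : ℝ))

lemma one_le_fact_real (n : ℕ) : (1 : ℝ) ≤ (n.factorial : ℝ) :=
  Nat.one_le_cast.mpr n.factorial_pos

lemma zbar_nonneg (L k : ℕ) {r : ℕ → ℝ} (h : memS r) (j : ℕ) : 0 ≤ zbar L k j r := by
  have htl0 := h.tail_nonneg j
  have hps0 : 0 ≤ ∑ m ∈ Finset.range j, r m := Finset.sum_nonneg fun m _ => h.1 m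
  unfold zbar
  refine Finset.sum_nonneg fun i₁ hi₁ => mul_nonneg (div_nonneg (pow_nonneg hps0 _) (by positivity)) ?_
  rw [Finset.mem_range] at hi₁
  refine Finset.sum_nonneg fun i₂ hi₂ => ?_
  rw [Finset.mem_Icc] at hi₂
  have hm : (0:ℝ) ≤ min (i₂ : ℝ) ((k:ℝ) - (i₁:ℝ)) := by
    apply le_min
    · exact_mod_cast Nat.zero_le i₂
    · have : (i₁:ℝ) ≤ (k:ℝ) := by exact_mod_cast hi₁.le
      linarith
  exact mul_nonneg (mul_nonneg hm
    (div_nonneg (pow_nonneg (h.1 j) _) (by positivity)))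
    (div_nonneg (pow_nonneg htl0 _) (by positivity))

lemma zbar_le (L k : ℕ) {r : ℕ → ℝ} (h : memS r) (j : ℕ) :
    zbar L k j r ≤ ((k : ℝ) * L * L) * r j := by
  have htl0 := h.tail_nonneg j
  have htl1 := h.tail_le_one j
  have hps0 : 0 ≤ ∑ m ∈ Finset.range j, r m := Finset.sum_nonneg fun m _ => h.1 m
  have hps1 := h.partial_le_one j
  have hrj0 := h.1 j
  have hrj1 := h.r_le_one j
  have hL0 : (0:ℝ) ≤ (L:ℝ) := Nat.cast_nonneg L
  have key : ∀ i₁ ∈ Finset.range k,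
      ((∑ m ∈ Finset.range j, r m) ^ i₁ / (i₁.factorial : ℝ)) *
        ∑ i₂ ∈ Finset.Icc 1 (L - i₁),
          (min i₂ (k - i₁) : ℝ) * (r j ^ i₂ / (i₂.factorial : ℝ)) *
            ((tsumTail r j) ^ (L - i₁ - i₂) / ((L - i₁ - i₂).factorial : ℝ))
        ≤ (L:ℝ) * ((L:ℝ) * r j) := by
    intro i₁ hi₁
    rw [Finset.mem_range] at hi₁
    have hA : (∑ m ∈ Finset.range j, r m) ^ i₁ / (i₁.factorial : ℝ) ≤ 1 :=
      le_trans (div_le_self (pow_nonneg hps0 _) (one_le_fact_real _)) (pow_le_one₀ hps0 hps1)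
    have hA0 : 0 ≤ (∑ m ∈ Finset.range j, r m) ^ i₁ / (i₁.factorial : ℝ) :=
      div_nonneg (pow_nonneg hps0 _) (by positivity)
    have hB : ∑ i₂ ∈ Finset.Icc 1 (L - i₁),
          (min i₂ (k - i₁) : ℝ) * (r j ^ i₂ / (i₂.factorial : ℝ)) *
            ((tsumTail r j) ^ (L - i₁ - i₂) / ((L - i₁ - i₂).factorial : ℝ))
        ≤ (L:ℝ) * ((L:ℝ) * r j) := by
      have hterm : ∀ i₂ ∈ Finset.Icc 1 (L - i₁),
          (min i₂ (k - i₁) : ℝ) * (r j ^ i₂ / (i₂.factorial : ℝ)) *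
            ((tsumTail r j) ^ (L - i₁ - i₂) / ((L - i₁ - i₂).factorial : ℝ))
          ≤ (L:ℝ) * r j := by
        intro i₂ hi₂
        rw [Finset.mem_Icc] at hi₂
        have hi2L : (i₂:ℝ) ≤ (L:ℝ) := by
          exact_mod_cast le_trans hi₂.2 (Nat.sub_le L i₁)
        have hmin : min (i₂ : ℝ) ((k:ℝ) - (i₁:ℝ)) ≤ (L:ℝ) :=
          le_trans (min_le_left _ _) hi2L
        have hmin0 : (0:ℝ) ≤ min (i₂ : ℝ) ((k:ℝ) - (i₁:ℝ)) := by
          apply le_min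
          · exact_mod_cast Nat.zero_le i₂
          · have : (i₁:ℝ) ≤ (k:ℝ) := by exact_mod_cast hi₁.le
            linarith
        have hr2 : r j ^ i₂ / (i₂.factorial : ℝ) ≤ r j :=
          le_trans (div_le_self (pow_nonneg hrj0 _) (one_le_fact_real _))
            (pow_le_of_le_one hrj0 hrj1 (by omega))
        have hr20 : 0 ≤ r j ^ i₂ / (i₂.factorial : ℝ) :=
          div_nonneg (pow_nonneg hrj0 _) (by positivity)
        have ht2 : (tsumTail r j) ^ (L - i₁ - i₂) / ((L - i₁ - i₂).factorial : ℝ) ≤ 1 :=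
          le_trans (div_le_self (pow_nonneg htl0 _) (one_le_fact_real _))
            (pow_le_one₀ htl0 htl1)
        have ht20 : 0 ≤ (tsumTail r j) ^ (L - i₁ - i₂) / ((L - i₁ - i₂).factorial : ℝ) :=
          div_nonneg (pow_nonneg htl0 _) (by positivity)
        calc (min i₂ (k - i₁) : ℝ) * (r j ^ i₂ / (i₂.factorial : ℝ)) *
              ((tsumTail r j) ^ (L - i₁ - i₂) / ((L - i₁ - i₂).factorial : ℝ))
            ≤ (L:ℝ) * r j * 1 := by
              exact mul_le_mul (mul_le_mul hmin hr2 hr20 hL0) ht2 ht20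
                (mul_nonneg hL0 hrj0)
          _ = (L:ℝ) * r j := mul_one _
      calc ∑ i₂ ∈ Finset.Icc 1 (L - i₁),
            (min i₂ (k - i₁) : ℝ) * (r j ^ i₂ / (i₂.factorial : ℝ)) *
              ((tsumTail r j) ^ (L - i₁ - i₂) / ((L - i₁ - i₂).factorial : ℝ))
          ≤ ∑ _i₂ ∈ Finset.Icc 1 (L - i₁), (L:ℝ) * r j := Finset.sum_le_sum hterm
        _ = ((Finset.Icc 1 (L - i₁)).card : ℝ) * ((L:ℝ) * r j) := by
            rw [Finset.sum_const, nsmul_eq_mul]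
        _ ≤ (L:ℝ) * ((L:ℝ) * r j) := by
            apply mul_le_mul_of_nonneg_right _ (mul_nonneg hL0 hrj0)
            rw [Nat.card_Icc]
            exact_mod_cast (by omega : L - i₁ + 1 - 1 ≤ L)
    have hB0 : 0 ≤ ∑ i₂ ∈ Finset.Icc 1 (L - i₁),
          (min i₂ (k - i₁) : ℝ) * (r j ^ i₂ / (i₂.factorial : ℝ)) *
            ((tsumTail r j) ^ (L - i₁ - i₂) / ((L - i₁ - i₂).factorial : ℝ)) := by
      refine Finset.sum_nonneg fun i₂ _ => ?_
      have hm : (0:ℝ) ≤ min (i₂ : ℝ) ((k:ℝ) - (i₁:ℝ)) := by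
        apply le_min
        · exact_mod_cast Nat.zero_le i₂
        · have : (i₁:ℝ) ≤ (k:ℝ) := by exact_mod_cast hi₁.le
          linarith
      exact mul_nonneg (mul_nonneg hm
        (div_nonneg (pow_nonneg hrj0 _) (by positivity)))
        (div_nonneg (pow_nonneg htl0 _) (by positivity))
    calc ((∑ m ∈ Finset.range j, r m) ^ i₁ / (i₁.factorial : ℝ)) *
          ∑ i₂ ∈ Finset.Icc 1 (L - i₁),
            (min i₂ (k - i₁) : ℝ) * (r j ^ i₂ / (i₂.factorial : ℝ)) *
              ((tsumTail r j) ^ (L - i₁ - i₂) / ((L - i₁ - i₂).factorial : ℝ))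
        ≤ 1 * ((L:ℝ) * ((L:ℝ) * r j)) := mul_le_mul hA hB hB0 zero_le_one
      _ = (L:ℝ) * ((L:ℝ) * r j) := one_mul _
  calc zbar L k j r ≤ ∑ _i₁ ∈ Finset.range k, (L:ℝ) * ((L:ℝ) * r j) :=
        Finset.sum_le_sum key
    _ = (k:ℝ) * ((L:ℝ) * ((L:ℝ) * r j)) := by
        rw [Finset.sum_const, Finset.card_range, nsmul_eq_mul]
    _ = ((k : ℝ) * L * L) * r j := by ring

/-- The drift map `F`, defined coordinatewise:
`F_j(r) = λ·L!·(ζ̄(j−1,r) − ζ̄(j,r)) + k·(r_{j+1} − r_j)` for `j ≥ 1` and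
`F_0(r) = −λ·L!·ζ̄(0,r) + k·r_1`. -/
def Fmap (L k : ℕ) (lam : ℝ) (r : ℕ → ℝ) : ℕ → ℝ
  | 0 => -(lam * (L.factorial : ℝ)) * zbar L k 0 r + (k : ℝ) * r 1
  | (j + 1) => lam * (L.factorial : ℝ) * (zbar L k j r - zbar L k (j + 1) r)
      + (k : ℝ) * (r (j + 2) - r (j + 1))

/-- Prepend a zero to a sequence. -/
def prepend0 (f : ℕ → ℝ) : ℕ → ℝ
  | 0 => 0
  | (n + 1) => f n

lemma prepend0_summable {f : ℕ → ℝ} (hf : Summable f) : Summable (prepend0 f) := by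
  have he : (fun n => prepend0 f (n + 1)) = f := funext fun n => rfl
  exact (summable_nat_add_iff 1).mp (he ▸ hf)

lemma prepend0_tsum {f : ℕ → ℝ} (hf : Summable f) : ∑' j, prepend0 f j = ∑' j, f j := by
  rw [Summable.tsum_eq_zero_add (prepend0_summable hf)]
  simp [prepend0]

/-- for every `r ∈ 𝒮`, `F(r) ∈ ℓ¹`, `Σ_j F_j(r) = 0`, and
`sup_{r ∈ 𝒮} ‖F(r)‖₁ < ∞`. -/
theorem Fmap_mem_l1_sum_zero_and_bounded (L k : ℕ) (hL : 1 ≤ L) (hk : 1 ≤ k) (hkL : k ≤ L)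
    (lam : ℝ) (hlam : 0 < lam) :
    (∀ r : ℕ → ℝ, memS r →
      Summable (fun j => |Fmap L k lam r j|) ∧ (∑' j, Fmap L k lam r j) = 0) ∧
    ∃ C : ℝ, ∀ r : ℕ → ℝ, memS r → (∑' j, |Fmap L k lam r j|) ≤ C := by

  set C0 : ℝ := (k : ℝ) * L * L with hC0
  set A : ℝ := lam * (L.factorial : ℝ) with hA
  have hA0 : 0 ≤ A := mul_nonneg hlam.le (Nat.cast_nonneg _)
  have hk0 : (0:ℝ) ≤ (k:ℝ) := Nat.cast_nonneg k
  -- main per-r facts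
  have main : ∀ r : ℕ → ℝ, memS r →
      Summable (fun j => |Fmap L k lam r j|) ∧ (∑' j, Fmap L k lam r j) = 0 ∧
      (∑' j, |Fmap L k lam r j|) ≤ A * (C0 + C0) + (k:ℝ) * (1 + 1) := by
    intro r h
    set Z : ℕ → ℝ := fun j => zbar L k j r with hZdef
    have hZ0 : ∀ j, 0 ≤ Z j := fun j => zbar_nonneg L k h j
    have hZle : ∀ j, Z j ≤ C0 * r j := fun j => zbar_le L k h j
    have hZsum : Summable Z :=
      Summable.of_nonneg_of_le hZ0 hZle (h.2.1.mul_left C0)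
    have hZtsum : ∑' j, Z j ≤ C0 := by
      calc ∑' j, Z j ≤ ∑' j, C0 * r j := Summable.tsum_le_tsum hZle hZsum (h.2.1.mul_left C0)
        _ = C0 * ∑' j, r j := tsum_mul_left
        _ = C0 := by rw [h.2.2, mul_one]
    set Zp : ℕ → ℝ := prepend0 Z with hZpdef
    have hZpsum : Summable Zp := prepend0_summable hZsum
    have hZptsum : ∑' j, Zp j = ∑' j, Z j := prepend0_tsum hZsum
    set rs : ℕ → ℝ := fun j => r (j + 1) with hrsdef
    have hrssum : Summable rs := (summable_nat_add_iff 1).mpr h.2.1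
    have hrstsum : ∑' j, rs j ≤ 1 := by
      have h1 : ∑' j, r j = r 0 + ∑' j, r (j + 1) := Summable.tsum_eq_zero_add h.2.1
      rw [h.2.2] at h1
      have := h.1 0
      simp only [hrsdef]
      linarith
    set rp : ℕ → ℝ := prepend0 rs with hrpdef
    have hrpsum : Summable rp := prepend0_summable hrssum
    have hrptsum : ∑' j, rp j = ∑' j, rs j := prepend0_tsum hrssum
    have hrp0 : ∀ j, 0 ≤ rp j := by
      intro j; cases j with
      | zero => exact le_refl 0
      | succ n => exact h.1 (n + 1)
    have hZp0 : ∀ j, 0 ≤ Zp j := by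
      intro j; cases j with
      | zero => exact le_refl 0
      | succ n => exact hZ0 n
    -- decomposition of F
    have hF : ∀ j, Fmap L k lam r j = A * (Zp j - Z j) + (k:ℝ) * (rs j - rp j) := by
      intro j; cases j with
      | zero =>
          show -(lam * (L.factorial : ℝ)) * zbar L k 0 r + (k : ℝ) * r 1 = _
          simp only [hZpdef, hZdef, hrpdef, hrsdef, prepend0, hA]
          ring
      | succ n =>
          show lam * (L.factorial : ℝ) * (zbar L k n r - zbar L k (n + 1) r)
              + (k : ℝ) * (r (n + 2) - r (n + 1)) = _
          simp only [hZpdef, hZdef, hrpdef, hrsdef, prepend0, hA]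
    -- bound on |F|
    have habs : ∀ j, |Fmap L k lam r j| ≤ A * (Zp j + Z j) + (k:ℝ) * (rs j + rp j) := by
      intro j
      rw [hF j]
      have h1 : |Zp j - Z j| ≤ Zp j + Z j :=
        abs_sub_le_iff.mpr ⟨by linarith [hZ0 j, hZp0 j], by linarith [hZ0 j, hZp0 j]⟩
      have h2 : |rs j - rp j| ≤ rs j + rp j := by
        have := h.1 (j + 1)
        exact abs_sub_le_iff.mpr ⟨by simp only [hrsdef]; linarith [hrp0 j],
          by simp only [hrsdef]; linarith [hrp0 j]⟩
      calc |A * (Zp j - Z j) + (k:ℝ) * (rs j - rp j)|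
          ≤ |A * (Zp j - Z j)| + |(k:ℝ) * (rs j - rp j)| := abs_add_le _ _
        _ = A * |Zp j - Z j| + (k:ℝ) * |rs j - rp j| := by
            rw [abs_mul A (Zp j - Z j), abs_mul ((k:ℝ)) (rs j - rp j), abs_of_nonneg hA0, abs_of_nonneg hk0]
        _ ≤ A * (Zp j + Z j) + (k:ℝ) * (rs j + rp j) := by
            exact add_le_add (mul_le_mul_of_nonneg_left h1 hA0)
              (mul_le_mul_of_nonneg_left h2 hk0)
    have hgsum : Summable (fun j => A * (Zp j + Z j) + (k:ℝ) * (rs j + rp j)) :=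
      ((hZpsum.add hZsum).mul_left A).add ((hrssum.add hrpsum).mul_left (k:ℝ))
    have hFsumabs : Summable (fun j => |Fmap L k lam r j|) :=
      Summable.of_nonneg_of_le (fun j => abs_nonneg _) habs hgsum
    refine ⟨hFsumabs, ?_, ?_⟩
    · -- sum is zero
      have hFeq : (fun j => Fmap L k lam r j)
          = fun j => A * (Zp j - Z j) + (k:ℝ) * (rs j - rp j) := funext hF
      rw [hFeq]
      rw [Summable.tsum_add (((hZpsum.sub hZsum).mul_left A)) (((hrssum.sub hrpsum).mul_left (k:ℝ)))]
      rw [tsum_mul_left, tsum_mul_left, Summable.tsum_sub hZpsum hZsum, Summable.tsum_sub hrssum hrpsum,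
        hZptsum, hrptsum]
      ring
    · -- bound
      calc ∑' j, |Fmap L k lam r j|
          ≤ ∑' j, (A * (Zp j + Z j) + (k:ℝ) * (rs j + rp j)) :=
            Summable.tsum_le_tsum habs hFsumabs hgsum
        _ = A * ((∑' j, Zp j) + ∑' j, Z j) + (k:ℝ) * ((∑' j, rs j) + ∑' j, rp j) := by
            rw [Summable.tsum_add (((hZpsum.add hZsum).mul_left A)) (((hrssum.add hrpsum).mul_left (k:ℝ))),
              tsum_mul_left, tsum_mul_left, Summable.tsum_add hZpsum hZsum, Summable.tsum_add hrssum hrpsum]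
        _ ≤ A * (C0 + C0) + (k:ℝ) * (1 + 1) := by
            apply add_le_add
            · apply mul_le_mul_of_nonneg_left _ hA0
              rw [hZptsum]; linarith
            · apply mul_le_mul_of_nonneg_left _ hk0
              rw [hrptsum]; linarith
  exact ⟨fun r h => ⟨(main r h).1, (main r h).2.1⟩,
    ⟨A * (C0 + C0) + (k:ℝ) * (1 + 1), fun r h => (main r h).2.2⟩⟩
end
end

section
/- There exists a constant κ ∈ (0,∞), depending only on L and k, such that for all r, r̃ ∈ 𝒮, all j ∈ ℕ₀, and all integers i₁, i₂ with 0 ≤ i₁ ≤ k−1 and 1 ≤ i₂ ≤ L−i₁, one has |R_{j,i₁,i₂}(r,r̃)| ≤ κ · ( |r_j − r̃_j| + r̃_j · ‖r − r̃‖₁ ). -/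
noncomputable section

open scoped BigOperators

/-- The quantity `R_{j,i₁,i₂}(r, r̃)`. -/
def Rfun (L : ℕ) (j i₁ i₂ : ℕ) (r rt : ℕ → ℝ) : ℝ :=
  (∑ m ∈ Finset.range j, r m) ^ i₁ * (tsumTail r j) ^ (L - i₁ - i₂) * (r j) ^ i₂
    - (∑ m ∈ Finset.range j, rt m) ^ i₁ * (tsumTail rt j) ^ (L - i₁ - i₂) * (rt j) ^ i₂

private lemma pow_diff_le (n : ℕ) {x y : ℝ} (hx0 : 0 ≤ x) (hx1 : x ≤ 1)
    (hy0 : 0 ≤ y) (hy1 : y ≤ 1) : |x ^ n - y ^ n| ≤ n * |x - y| := by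
  induction n with
  | zero => simp
  | succ n ih =>
    have h1 : x ^ (n+1) - y ^ (n+1) = x ^ n * (x - y) + (x ^ n - y ^ n) * y := by ring
    have hxn : |x ^ n| ≤ 1 := by
      rw [abs_of_nonneg (pow_nonneg hx0 n)]; exact pow_le_one₀ hx0 hx1
    have hyabs : |y| ≤ 1 := abs_le.2 ⟨by linarith, hy1⟩
    calc |x ^ (n+1) - y ^ (n+1)|
        ≤ |x ^ n * (x - y)| + |(x ^ n - y ^ n) * y| := by rw [h1]; exact abs_add_le _ _
      _ = |x ^ n| * |x - y| + |x ^ n - y ^ n| * |y| := by rw [abs_mul, abs_mul]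
      _ ≤ 1 * |x - y| + (n * |x - y|) * 1 :=
          add_le_add (mul_le_mul_of_nonneg_right hxn (abs_nonneg _))
            (mul_le_mul ih hyabs (abs_nonneg _) (by positivity))
      _ = (n + 1 : ℕ) * |x - y| := by push_cast; ring

set_option maxHeartbeats 1000000 in
/-- there is `κ ∈ (0,∞)`, depending only on `L` and `k`, such that for all
`r, r̃ ∈ 𝒮`, all `j`, and all `0 ≤ i₁ ≤ k−1`, `1 ≤ i₂ ≤ L−i₁`,
`|R_{j,i₁,i₂}(r,r̃)| ≤ κ(|r_j − r̃_j| + r̃_j‖r − r̃‖₁)`. -/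
theorem Rfun_l1_bound (L k : ℕ) (hL : 1 ≤ L) (hk : 1 ≤ k) (hkL : k ≤ L) :
    ∃ κ : ℝ, 0 < κ ∧ ∀ r rt : ℕ → ℝ, memS r → memS rt → ∀ j i₁ i₂ : ℕ,
      i₁ < k → 1 ≤ i₂ → i₂ ≤ L - i₁ →
      |Rfun L j i₁ i₂ r rt| ≤ κ * (|r j - rt j| + rt j * ∑' m, |r m - rt m|) := by
  refine ⟨2 * L, by linarith [(show (1:ℝ) ≤ L by exact_mod_cast hL)], ?_⟩
  intro r rt hr hrt j i₁ i₂ hi₁ hi₂1 hi₂2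
  obtain ⟨hrpos, hrsum, hrtot⟩ := hr
  obtain ⟨htpos, htsum, httot⟩ := hrt
  set D := ∑' m, |r m - rt m| with hDdef
  have hsubsum : Summable fun m => r m - rt m := hrsum.sub htsum
  have hDsum : Summable fun m => |r m - rt m| := hsubsum.abs
  have hDnn : 0 ≤ D := tsum_nonneg fun m => abs_nonneg _
  -- injection for tails
  have hinj : Function.Injective fun m : ℕ => j + 1 + m := fun a b h => by
    simpa using h
  have htail_r : Summable fun m => r (j + 1 + m) := hrsum.comp_injective hinj
  have htail_rt : Summable fun m => rt (j + 1 + m) := htsum.comp_injective hinj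
  -- abbreviations
  set A := ∑ m ∈ Finset.range j, r m with hAdef
  set A' := ∑ m ∈ Finset.range j, rt m with hA'def
  set B := tsumTail r j with hBdef
  set B' := tsumTail rt j with hB'def
  set a := r j with hadef
  set b := rt j with hbdef
  set e := L - i₁ - i₂ with hedef
  -- basic bounds in [0,1]
  have hA0 : 0 ≤ A := Finset.sum_nonneg fun m _ => hrpos m
  have hA1 : A ≤ 1 := hrtot ▸ Summable.sum_le_tsum _ (fun m _ => hrpos m) hrsum
  have hA'0 : 0 ≤ A' := Finset.sum_nonneg fun m _ => htpos m
  have hA'1 : A' ≤ 1 := httot ▸ Summable.sum_le_tsum _ (fun m _ => htpos m) htsum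
  have hB0 : 0 ≤ B := tsum_nonneg fun m => hrpos _
  have hB1 : B ≤ 1 := by
    rw [hBdef, tsumTail, ← hrtot]
    exact Summable.tsum_le_tsum_of_inj _ hinj (fun c _ => hrpos c) (fun m => le_rfl) htail_r hrsum
  have hB'0 : 0 ≤ B' := tsum_nonneg fun m => htpos _
  have hB'1 : B' ≤ 1 := by
    rw [hB'def, tsumTail, ← httot]
    exact Summable.tsum_le_tsum_of_inj _ hinj (fun c _ => htpos c) (fun m => le_rfl) htail_rt htsum
  have ha0 : 0 ≤ a := hrpos j
  have ha1 : a ≤ 1 := hrtot ▸ Summable.le_tsum hrsum j (fun m _ => hrpos m)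
  have hb0 : 0 ≤ b := htpos j
  have hb1 : b ≤ 1 := httot ▸ Summable.le_tsum htsum j (fun m _ => htpos m)
  -- |A - A'| ≤ D
  have hAdiff : |A - A'| ≤ D := by
    rw [hAdef, hA'def, ← Finset.sum_sub_distrib]
    calc |∑ m ∈ Finset.range j, (r m - rt m)| ≤ ∑ m ∈ Finset.range j, |r m - rt m| :=
          Finset.abs_sum_le_sum_abs _ _
      _ ≤ D := Summable.sum_le_tsum _ (fun m _ => abs_nonneg _) hDsum
  -- |B - B'| ≤ D
  have hBdiff : |B - B'| ≤ D := by
    have h1 : B - B' = ∑' m, (r (j + 1 + m) - rt (j + 1 + m)) := by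
      rw [hBdef, hB'def, tsumTail, tsumTail, Summable.tsum_sub htail_r htail_rt]
    rw [h1]
    calc |∑' m, (r (j + 1 + m) - rt (j + 1 + m))|
        ≤ ∑' m, |r (j + 1 + m) - rt (j + 1 + m)| := by
          simpa [Real.norm_eq_abs] using
            norm_tsum_le_tsum_norm (f := fun m => r (j + 1 + m) - rt (j + 1 + m))
              (by simpa [Real.norm_eq_abs] using (htail_r.sub htail_rt).abs)
      _ ≤ D := Summable.tsum_le_tsum_of_inj _ hinj (fun c _ => abs_nonneg _) (fun m => le_rfl)
          (htail_r.sub htail_rt).abs hDsum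
  -- cast bounds
  have hi₁L : (i₁ : ℝ) ≤ L := by exact_mod_cast le_trans (Nat.le_of_lt hi₁) hkL
  have hi₂L : (i₂ : ℝ) ≤ L := by
    have : i₂ ≤ L := le_trans hi₂2 (Nat.sub_le _ _)
    exact_mod_cast this
  have heL : (e : ℝ) ≤ L := by
    have : e ≤ L := le_trans (Nat.sub_le _ _) (Nat.sub_le _ _)
    exact_mod_cast this
  have hLpos : (0:ℝ) < L := by exact_mod_cast hL
  -- pow diff bounds
  have hP1 : |a ^ i₂ - b ^ i₂| ≤ i₂ * |a - b| := pow_diff_le _ ha0 ha1 hb0 hb1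
  have hP2 : |A ^ i₁ - A' ^ i₁| ≤ i₁ * |A - A'| := pow_diff_le _ hA0 hA1 hA'0 hA'1
  have hP3 : |B ^ e - B' ^ e| ≤ e * |B - B'| := pow_diff_le _ hB0 hB1 hB'0 hB'1
  have hABle : |A ^ i₁ * B ^ e| ≤ 1 := by
    rw [abs_mul, abs_of_nonneg (pow_nonneg hA0 _), abs_of_nonneg (pow_nonneg hB0 _)]
    exact mul_le_one₀ (pow_le_one₀ hA0 hA1) (pow_nonneg hB0 _) (pow_le_one₀ hB0 hB1)
  have hbpow : |b ^ i₂| ≤ b := by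
    rw [abs_of_nonneg (pow_nonneg hb0 _)]
    exact pow_le_of_le_one hb0 hb1 (Nat.one_le_iff_ne_zero.mp hi₂1)
  have hBe1 : |B ^ e| ≤ 1 := by
    rw [abs_of_nonneg (pow_nonneg hB0 _)]; exact pow_le_one₀ hB0 hB1
  have hA'1' : |A' ^ i₁| ≤ 1 := by
    rw [abs_of_nonneg (pow_nonneg hA'0 _)]; exact pow_le_one₀ hA'0 hA'1
  have hA1' : |A ^ i₁| ≤ 1 := by
    rw [abs_of_nonneg (pow_nonneg hA0 _)]; exact pow_le_one₀ hA0 hA1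
  -- key algebraic identity
  have key : Rfun L j i₁ i₂ r rt =
      (A ^ i₁ * B ^ e) * (a ^ i₂ - b ^ i₂)
      + ((A ^ i₁ - A' ^ i₁) * B ^ e + A' ^ i₁ * (B ^ e - B' ^ e)) * b ^ i₂ := by
    simp only [Rfun, ← hAdef, ← hA'def, ← hBdef, ← hB'def, ← hadef, ← hbdef, ← hedef]
    ring
  have hABle1 : |A ^ i₁| * |B ^ e| ≤ 1 :=
    mul_le_one₀ hA1' (abs_nonneg _) hBe1
  have hP1' : |a ^ i₂ - b ^ i₂| ≤ L * |a - b| :=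
    le_trans hP1 (mul_le_mul_of_nonneg_right hi₂L (abs_nonneg _))
  have hT1 : |A ^ i₁| * |B ^ e| * |a ^ i₂ - b ^ i₂| ≤ L * |a - b| := by
    calc |A ^ i₁| * |B ^ e| * |a ^ i₂ - b ^ i₂| ≤ 1 * (L * |a - b|) :=
          mul_le_mul hABle1 hP1' (abs_nonneg _) one_pos.le
      _ = L * |a - b| := one_mul _
  have e1 : |A ^ i₁ - A' ^ i₁| * |B ^ e| ≤ L * D := by
    calc |A ^ i₁ - A' ^ i₁| * |B ^ e| ≤ (i₁ * |A - A'|) * 1 :=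
          mul_le_mul hP2 hBe1 (abs_nonneg _) (by positivity)
      _ = i₁ * |A - A'| := mul_one _
      _ ≤ L * D := mul_le_mul hi₁L hAdiff (abs_nonneg _) hLpos.le
  have e2 : |A' ^ i₁| * |B ^ e - B' ^ e| ≤ L * D := by
    calc |A' ^ i₁| * |B ^ e - B' ^ e| ≤ 1 * (e * |B - B'|) :=
          mul_le_mul hA'1' hP3 (abs_nonneg _) one_pos.le
      _ = e * |B - B'| := one_mul _
      _ ≤ L * D := mul_le_mul heL hBdiff (abs_nonneg _) hLpos.le
  have hSinner : |(A ^ i₁ - A' ^ i₁) * B ^ e + A' ^ i₁ * (B ^ e - B' ^ e)| ≤ 2 * L * D := by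
    calc |(A ^ i₁ - A' ^ i₁) * B ^ e + A' ^ i₁ * (B ^ e - B' ^ e)|
        ≤ |(A ^ i₁ - A' ^ i₁) * B ^ e| + |A' ^ i₁ * (B ^ e - B' ^ e)| := abs_add_le _ _
      _ = |A ^ i₁ - A' ^ i₁| * |B ^ e| + |A' ^ i₁| * |B ^ e - B' ^ e| := by
          rw [abs_mul, abs_mul]
      _ ≤ L * D + L * D := add_le_add e1 e2
      _ = 2 * L * D := by ring
  have hT2 : |(A ^ i₁ - A' ^ i₁) * B ^ e + A' ^ i₁ * (B ^ e - B' ^ e)| * |b ^ i₂|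
      ≤ (2 * L * D) * b :=
    mul_le_mul hSinner hbpow (abs_nonneg _) (by positivity)
  calc |Rfun L j i₁ i₂ r rt|
      ≤ |(A ^ i₁ * B ^ e) * (a ^ i₂ - b ^ i₂)|
        + |((A ^ i₁ - A' ^ i₁) * B ^ e + A' ^ i₁ * (B ^ e - B' ^ e)) * b ^ i₂| := by
        rw [key]; exact abs_add_le _ _
    _ = |A ^ i₁| * |B ^ e| * |a ^ i₂ - b ^ i₂|
        + |(A ^ i₁ - A' ^ i₁) * B ^ e + A' ^ i₁ * (B ^ e - B' ^ e)| * |b ^ i₂| := by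
        simp only [abs_mul]
    _ ≤ L * |a - b| + (2 * L * D) * b := add_le_add hT1 hT2
    _ ≤ 2 * L * (|a - b| + b * D) := by nlinarith [mul_nonneg hb0 hDnn, abs_nonneg (a - b)]
end
end

section
/- There exists a constant κ ∈ (0,∞), depending only on L, k and λ, such that for all r, r̃ ∈ 𝒮 with Σ_{j=0}^∞ j·r̃_j < ∞, one has ‖F(r) − F(r̃)‖₂ ≤ κ · (1 + Σ_{j=0}^∞ j·r̃_j)^{1/2} · ‖r − r̃‖₂ + 2k · ‖r − r̃‖₂. -/
noncomputable section

open scoped BigOperators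

noncomputable section
open scoped BigOperators
open Finset

private lemma pow_lip {x y : ℝ} (hx0 : 0 ≤ x) (hx1 : x ≤ 1) (hy0 : 0 ≤ y) (hy1 : y ≤ 1) (n : ℕ) :
    |x ^ n - y ^ n| ≤ (n : ℝ) * |x - y| := by
  induction n with
  | zero => simp
  | succ n ih =>
    have hid : x ^ (n+1) - y ^ (n+1) = x ^ n * (x - y) + y * (x ^ n - y ^ n) := by ring
    rw [hid]
    refine (abs_add_le _ _).trans ?_
    have h1 : |x ^ n * (x - y)| ≤ |x - y| := by
      rw [abs_mul, abs_of_nonneg (pow_nonneg hx0 n)]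
      nlinarith [abs_nonneg (x - y), pow_le_one₀ hx0 hx1 (n := n), pow_nonneg hx0 n]
    have h2 : |y * (x ^ n - y ^ n)| ≤ (n:ℝ) * |x - y| := by
      rw [abs_mul, abs_of_nonneg hy0]
      nlinarith [abs_nonneg (x ^ n - y ^ n)]
    push_cast
    linarith

/-- The abstract polynomial underlying `zbar`. -/
private def Zfun (L k : ℕ) (A a B : ℝ) : ℝ :=
  ∑ i₁ ∈ Finset.range k,
    (A ^ i₁ / (i₁.factorial : ℝ)) *
      ∑ i₂ ∈ Finset.Icc 1 (L - i₁),
        (min i₂ (k - i₁) : ℝ) * (a ^ i₂ / (i₂.factorial : ℝ)) *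
          (B ^ (L - i₁ - i₂) / ((L - i₁ - i₂).factorial : ℝ))

private lemma one_le_fact (n : ℕ) : (1:ℝ) ≤ (n.factorial : ℝ) := by
  exact_mod_cast Nat.one_le_iff_ne_zero.mpr n.factorial_pos.ne'

private lemma Z_inner_nonneg (L k i₁ : ℕ) (hik : i₁ < k) {a B : ℝ} (ha0 : 0 ≤ a) (hB0 : 0 ≤ B) :
    0 ≤ ∑ i₂ ∈ Finset.Icc 1 (L - i₁),
        (min i₂ (k - i₁) : ℝ) * (a ^ i₂ / (i₂.factorial : ℝ)) *
          (B ^ (L - i₁ - i₂) / ((L - i₁ - i₂).factorial : ℝ)) := by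
  refine Finset.sum_nonneg fun i₂ _ => ?_
  have hmin0 : (0:ℝ) ≤ (min i₂ (k - i₁) : ℝ) := by
    have : (i₁:ℝ) < (k:ℝ) := by exact_mod_cast hik
    refine le_min (by positivity) (by linarith)
  positivity

private lemma Z_inner_le (L k i₁ : ℕ) (hik : i₁ < k) (hkL : k ≤ L) {a B : ℝ} (ha0 : 0 ≤ a) (ha1 : a ≤ 1)
    (hB0 : 0 ≤ B) (hB1 : B ≤ 1) :
    ∑ i₂ ∈ Finset.Icc 1 (L - i₁),
        (min i₂ (k - i₁) : ℝ) * (a ^ i₂ / (i₂.factorial : ℝ)) *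
          (B ^ (L - i₁ - i₂) / ((L - i₁ - i₂).factorial : ℝ))
      ≤ (L:ℝ)^2 * a := by
  have hterm : ∀ i₂ ∈ Finset.Icc 1 (L - i₁),
      (min i₂ (k - i₁) : ℝ) * (a ^ i₂ / (i₂.factorial : ℝ)) *
          (B ^ (L - i₁ - i₂) / ((L - i₁ - i₂).factorial : ℝ)) ≤ (L:ℝ) * a := by
    intro i₂ hi₂
    rw [Finset.mem_Icc] at hi₂
    have h1 : (1:ℕ) ≤ i₂ := hi₂.1
    have hi2L : (i₂:ℝ) ≤ (L:ℝ) := by exact_mod_cast hi₂.2.trans (Nat.sub_le L i₁)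
    have hminL : (min i₂ (k - i₁) : ℝ) ≤ (L:ℝ) := (min_le_left _ _).trans hi2L
    have hmin0 : (0:ℝ) ≤ (min i₂ (k - i₁) : ℝ) := by
      have : (i₁:ℝ) < (k:ℝ) := by exact_mod_cast hik
      refine le_min (by positivity) (by linarith)
    have hap : a ^ i₂ / (i₂.factorial : ℝ) ≤ a := by
      have : a ^ i₂ ≤ a ^ 1 := pow_le_pow_of_le_one ha0 ha1 h1
      have hd : a ^ i₂ / (i₂.factorial : ℝ) ≤ a ^ i₂ :=
        div_le_self (pow_nonneg ha0 _) (one_le_fact _)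
      simpa using hd.trans this
    have hap0 : 0 ≤ a ^ i₂ / (i₂.factorial : ℝ) := by positivity
    have hbp : B ^ (L - i₁ - i₂) / ((L - i₁ - i₂).factorial : ℝ) ≤ 1 := by
      have h1 : B ^ (L - i₁ - i₂) ≤ 1 := pow_le_one₀ hB0 hB1
      have hd : B ^ (L - i₁ - i₂) / ((L - i₁ - i₂).factorial : ℝ) ≤ B ^ (L - i₁ - i₂) :=
        div_le_self (pow_nonneg hB0 _) (one_le_fact _)
      exact hd.trans h1
    have hbp0 : 0 ≤ B ^ (L - i₁ - i₂) / ((L - i₁ - i₂).factorial : ℝ) := by positivity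
    calc (min i₂ (k - i₁) : ℝ) * (a ^ i₂ / (i₂.factorial : ℝ)) *
          (B ^ (L - i₁ - i₂) / ((L - i₁ - i₂).factorial : ℝ))
        ≤ (L:ℝ) * a * 1 :=
          mul_le_mul (mul_le_mul hminL hap hap0 (by positivity)) hbp hbp0 (by positivity)
      _ = (L:ℝ) * a := by ring
  calc ∑ i₂ ∈ Finset.Icc 1 (L - i₁), _ ≤ (Finset.Icc 1 (L - i₁)).card • ((L:ℝ) * a) :=
        Finset.sum_le_card_nsmul _ _ _ hterm
    _ = ((Finset.Icc 1 (L - i₁)).card : ℝ) * ((L:ℝ) * a) := nsmul_eq_mul _ _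
    _ ≤ (L:ℝ) * ((L:ℝ) * a) := by
        have : ((Finset.Icc 1 (L - i₁)).card : ℝ) ≤ (L:ℝ) := by
          rw [Nat.card_Icc]
          have : L - i₁ + 1 - 1 ≤ L := by omega
          exact_mod_cast this
        have hLa : 0 ≤ (L:ℝ) * a := by positivity
        nlinarith
    _ = (L:ℝ)^2 * a := by ring

private lemma Z_inner_diff (L k i₁ : ℕ) (hik : i₁ < k) (hkL : k ≤ L)
    {a B a' B' : ℝ} (ha0 : 0 ≤ a) (ha1 : a ≤ 1) (hB0 : 0 ≤ B) (hB1 : B ≤ 1)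
    (ha0' : 0 ≤ a') (ha1' : a' ≤ 1) (hB0' : 0 ≤ B') (hB1' : B' ≤ 1) :
    |(∑ i₂ ∈ Finset.Icc 1 (L - i₁),
        (min i₂ (k - i₁) : ℝ) * (a ^ i₂ / (i₂.factorial : ℝ)) *
          (B ^ (L - i₁ - i₂) / ((L - i₁ - i₂).factorial : ℝ)))
      - ∑ i₂ ∈ Finset.Icc 1 (L - i₁),
        (min i₂ (k - i₁) : ℝ) * (a' ^ i₂ / (i₂.factorial : ℝ)) *
          (B' ^ (L - i₁ - i₂) / ((L - i₁ - i₂).factorial : ℝ))|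
      ≤ (L:ℝ)^3 * (|a - a'| + a' * |B - B'|) := by
  rw [← Finset.sum_sub_distrib]
  refine (Finset.abs_sum_le_sum_abs _ _).trans ?_
  have hterm : ∀ i₂ ∈ Finset.Icc 1 (L - i₁),
      |(min i₂ (k - i₁) : ℝ) * (a ^ i₂ / (i₂.factorial : ℝ)) *
          (B ^ (L - i₁ - i₂) / ((L - i₁ - i₂).factorial : ℝ))
        - (min i₂ (k - i₁) : ℝ) * (a' ^ i₂ / (i₂.factorial : ℝ)) *
          (B' ^ (L - i₁ - i₂) / ((L - i₁ - i₂).factorial : ℝ))|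
        ≤ (L:ℝ)^2 * (|a - a'| + a' * |B - B'|) := by
    intro i₂ hi₂
    rw [Finset.mem_Icc] at hi₂
    set e := L - i₁ - i₂ with he
    have hi2L : i₂ ≤ L := hi₂.2.trans (Nat.sub_le L i₁)
    have heL : e ≤ L := (Nat.sub_le _ _).trans (Nat.sub_le L i₁)
    have hmin0 : (0:ℝ) ≤ (min i₂ (k - i₁) : ℝ) := by
      have : (i₁:ℝ) < (k:ℝ) := by exact_mod_cast hik
      refine le_min (by positivity) (by linarith)
    have hminL : (min i₂ (k - i₁) : ℝ) ≤ (L:ℝ) :=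
      (min_le_left _ _).trans (by exact_mod_cast hi2L)
    have hx : |a ^ i₂ - a' ^ i₂| ≤ (L:ℝ) * |a - a'| := by
      refine (pow_lip ha0 ha1 ha0' ha1' i₂).trans ?_
      have : (i₂:ℝ) ≤ (L:ℝ) := by exact_mod_cast hi2L
      exact mul_le_mul_of_nonneg_right this (abs_nonneg _)
    have hy : |B ^ e - B' ^ e| ≤ (L:ℝ) * |B - B'| := by
      refine (pow_lip hB0 hB1 hB0' hB1' e).trans ?_
      have : (e:ℝ) ≤ (L:ℝ) := by exact_mod_cast heL
      exact mul_le_mul_of_nonneg_right this (abs_nonneg _)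
    have hxy : |a ^ i₂ * B ^ e - a' ^ i₂ * B' ^ e|
        ≤ (L:ℝ) * |a - a'| + a' * ((L:ℝ) * |B - B'|) := by
      have hid : a ^ i₂ * B ^ e - a' ^ i₂ * B' ^ e
          = (a ^ i₂ - a' ^ i₂) * B ^ e + a' ^ i₂ * (B ^ e - B' ^ e) := by ring
      rw [hid]
      refine (abs_add_le _ _).trans ?_
      have hBe : |B ^ e| ≤ 1 := by
        rw [abs_of_nonneg (pow_nonneg hB0 _)]; exact pow_le_one₀ hB0 hB1
      have ha'p : |a' ^ i₂| ≤ a' := by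
        rw [abs_of_nonneg (pow_nonneg ha0' _)]
        have : a' ^ i₂ ≤ a' ^ 1 := pow_le_pow_of_le_one ha0' ha1' hi₂.1
        simpa using this
      have h1 : |(a ^ i₂ - a' ^ i₂) * B ^ e| ≤ (L:ℝ) * |a - a'| := by
        rw [abs_mul]
        nlinarith [abs_nonneg (a ^ i₂ - a' ^ i₂), abs_nonneg (B ^ e)]
      have h2 : |a' ^ i₂ * (B ^ e - B' ^ e)| ≤ a' * ((L:ℝ) * |B - B'|) := by
        rw [abs_mul]
        nlinarith [abs_nonneg (a' ^ i₂), abs_nonneg (B ^ e - B' ^ e)]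
      linarith
    have hfac : (1:ℝ) ≤ (i₂.factorial : ℝ) * (e.factorial : ℝ) := by
      nlinarith [one_le_fact i₂, one_le_fact e]
    have hid2 : (min i₂ (k - i₁) : ℝ) * (a ^ i₂ / (i₂.factorial : ℝ)) *
          (B ^ e / (e.factorial : ℝ))
        - (min i₂ (k - i₁) : ℝ) * (a' ^ i₂ / (i₂.factorial : ℝ)) *
          (B' ^ e / (e.factorial : ℝ))
        = (min i₂ (k - i₁) : ℝ) / ((i₂.factorial : ℝ) * (e.factorial : ℝ))
            * (a ^ i₂ * B ^ e - a' ^ i₂ * B' ^ e) := by ring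
    rw [hid2, abs_mul]
    have hc : |(min i₂ (k - i₁) : ℝ) / ((i₂.factorial : ℝ) * (e.factorial : ℝ))| ≤ (L:ℝ) := by
      rw [abs_of_nonneg (by positivity)]
      refine (div_le_self hmin0 hfac).trans hminL
    calc |(min i₂ (k - i₁) : ℝ) / ((i₂.factorial : ℝ) * (e.factorial : ℝ))|
          * |a ^ i₂ * B ^ e - a' ^ i₂ * B' ^ e|
        ≤ (L:ℝ) * ((L:ℝ) * |a - a'| + a' * ((L:ℝ) * |B - B'|)) :=
          mul_le_mul hc hxy (abs_nonneg _) (by positivity)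
      _ = (L:ℝ)^2 * (|a - a'| + a' * |B - B'|) := by ring
  calc ∑ i₂ ∈ Finset.Icc 1 (L - i₁), |_|
      ≤ (Finset.Icc 1 (L - i₁)).card • ((L:ℝ)^2 * (|a - a'| + a' * |B - B'|)) :=
        Finset.sum_le_card_nsmul _ _ _ hterm
    _ = ((Finset.Icc 1 (L - i₁)).card : ℝ) * ((L:ℝ)^2 * (|a - a'| + a' * |B - B'|)) :=
        nsmul_eq_mul _ _
    _ ≤ (L:ℝ) * ((L:ℝ)^2 * (|a - a'| + a' * |B - B'|)) := by
        have hcard : ((Finset.Icc 1 (L - i₁)).card : ℝ) ≤ (L:ℝ) := by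
          rw [Nat.card_Icc]
          have : L - i₁ + 1 - 1 ≤ L := by omega
          exact_mod_cast this
        have : (0:ℝ) ≤ (L:ℝ)^2 * (|a - a'| + a' * |B - B'|) := by positivity
        nlinarith
    _ = (L:ℝ)^3 * (|a - a'| + a' * |B - B'|) := by ring

private lemma Zdiff (L k : ℕ) (hkL : k ≤ L) {A a B A' a' B' : ℝ}
    (hA0 : 0 ≤ A) (hA1 : A ≤ 1) (ha0 : 0 ≤ a) (ha1 : a ≤ 1) (hB0 : 0 ≤ B) (hB1 : B ≤ 1)
    (hA0' : 0 ≤ A') (hA1' : A' ≤ 1) (ha0' : 0 ≤ a') (ha1' : a' ≤ 1)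
    (hB0' : 0 ≤ B') (hB1' : B' ≤ 1) :
    |Zfun L k A a B - Zfun L k A' a' B'|
      ≤ (L:ℝ)^4 * (|a - a'| + a * |A - A'| + a' * |B - B'|) := by
  unfold Zfun
  rw [← Finset.sum_sub_distrib]
  refine (Finset.abs_sum_le_sum_abs _ _).trans ?_
  set D := |a - a'| + a * |A - A'| + a' * |B - B'| with hD
  have hD0 : 0 ≤ D := by positivity
  have hterm : ∀ i₁ ∈ Finset.range k,
      |(A ^ i₁ / (i₁.factorial : ℝ)) *
        (∑ i₂ ∈ Finset.Icc 1 (L - i₁),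
          (min i₂ (k - i₁) : ℝ) * (a ^ i₂ / (i₂.factorial : ℝ)) *
            (B ^ (L - i₁ - i₂) / ((L - i₁ - i₂).factorial : ℝ)))
        - (A' ^ i₁ / (i₁.factorial : ℝ)) *
        (∑ i₂ ∈ Finset.Icc 1 (L - i₁),
          (min i₂ (k - i₁) : ℝ) * (a' ^ i₂ / (i₂.factorial : ℝ)) *
            (B' ^ (L - i₁ - i₂) / ((L - i₁ - i₂).factorial : ℝ)))|
        ≤ (L:ℝ)^3 * D := by
    intro i₁ hi₁
    rw [Finset.mem_range] at hi₁
    set S := ∑ i₂ ∈ Finset.Icc 1 (L - i₁),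
          (min i₂ (k - i₁) : ℝ) * (a ^ i₂ / (i₂.factorial : ℝ)) *
            (B ^ (L - i₁ - i₂) / ((L - i₁ - i₂).factorial : ℝ)) with hS
    set S' := ∑ i₂ ∈ Finset.Icc 1 (L - i₁),
          (min i₂ (k - i₁) : ℝ) * (a' ^ i₂ / (i₂.factorial : ℝ)) *
            (B' ^ (L - i₁ - i₂) / ((L - i₁ - i₂).factorial : ℝ)) with hS'
    have hi₁L : i₁ ≤ L := (le_of_lt hi₁).trans hkL
    have hid : A ^ i₁ / (i₁.factorial : ℝ) * S - A' ^ i₁ / (i₁.factorial : ℝ) * S'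
        = (A ^ i₁ - A' ^ i₁) / (i₁.factorial : ℝ) * S
          + A' ^ i₁ / (i₁.factorial : ℝ) * (S - S') := by ring
    rw [hid]
    refine (abs_add_le _ _).trans ?_
    have hSnn : 0 ≤ S := Z_inner_nonneg L k i₁ hi₁ ha0 hB0
    have hSle : S ≤ (L:ℝ)^2 * a := Z_inner_le L k i₁ hi₁ hkL ha0 ha1 hB0 hB1
    have h1 : |(A ^ i₁ - A' ^ i₁) / (i₁.factorial : ℝ) * S| ≤ (L:ℝ)^3 * (a * |A - A'|) := by
      rw [abs_mul, abs_div]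
      have hpl : |A ^ i₁ - A' ^ i₁| ≤ (L:ℝ) * |A - A'| := by
        refine (pow_lip hA0 hA1 hA0' hA1' i₁).trans ?_
        have : (i₁:ℝ) ≤ (L:ℝ) := by exact_mod_cast hi₁L
        exact mul_le_mul_of_nonneg_right this (abs_nonneg _)
      have hdl : |A ^ i₁ - A' ^ i₁| / |(i₁.factorial : ℝ)| ≤ (L:ℝ) * |A - A'| := by
        refine (div_le_self (abs_nonneg _) ?_).trans hpl
        rw [abs_of_nonneg (by positivity)]; exact one_le_fact _
      rw [abs_of_nonneg hSnn]
      calc |A ^ i₁ - A' ^ i₁| / |(i₁.factorial : ℝ)| * S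
          ≤ ((L:ℝ) * |A - A'|) * ((L:ℝ)^2 * a) :=
            mul_le_mul hdl hSle hSnn (by positivity)
        _ = (L:ℝ)^3 * (a * |A - A'|) := by ring
    have h2 : |A' ^ i₁ / (i₁.factorial : ℝ) * (S - S')|
        ≤ (L:ℝ)^3 * (|a - a'| + a' * |B - B'|) := by
      rw [abs_mul]
      have hA'le : |A' ^ i₁ / (i₁.factorial : ℝ)| ≤ 1 := by
        rw [abs_of_nonneg (by positivity)]
        refine (div_le_self (pow_nonneg hA0' _) (one_le_fact _)).trans ?_
        exact pow_le_one₀ hA0' hA1'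
      have := Z_inner_diff L k i₁ hi₁ hkL ha0 ha1 hB0 hB1 ha0' ha1' hB0' hB1'
      calc |A' ^ i₁ / (i₁.factorial : ℝ)| * |S - S'|
          ≤ 1 * ((L:ℝ)^3 * (|a - a'| + a' * |B - B'|)) :=
            mul_le_mul hA'le this (abs_nonneg _) (by norm_num)
        _ = (L:ℝ)^3 * (|a - a'| + a' * |B - B'|) := by ring
    calc _ ≤ (L:ℝ)^3 * (a * |A - A'|) + (L:ℝ)^3 * (|a - a'| + a' * |B - B'|) := by linarith
      _ = (L:ℝ)^3 * D := by rw [hD]; ring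
  calc ∑ i₁ ∈ Finset.range k, |_|
      ≤ (Finset.range k).card • ((L:ℝ)^3 * D) := Finset.sum_le_card_nsmul _ _ _ hterm
    _ = ((Finset.range k).card : ℝ) * ((L:ℝ)^3 * D) := nsmul_eq_mul _ _
    _ ≤ (L:ℝ) * ((L:ℝ)^3 * D) := by
        have hcard : ((Finset.range k).card : ℝ) ≤ (L:ℝ) := by
          rw [Finset.card_range]; exact_mod_cast hkL
        have : (0:ℝ) ≤ (L:ℝ)^3 * D := by positivity
        nlinarith
    _ = (L:ℝ)^4 * D := by ring

private lemma summable_sq_add {f g : ℕ → ℝ} (hf : Summable fun j => f j ^ 2)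
    (hg : Summable fun j => g j ^ 2) : Summable fun j => (f j + g j) ^ 2 := by
  refine Summable.of_nonneg_of_le (fun j => sq_nonneg _) (fun j => ?_)
    (((hf.add hg)).mul_left 2)
  nlinarith [sq_nonneg (f j - g j)]

private lemma minkowski {f g : ℕ → ℝ} (hf : Summable fun j => f j ^ 2)
    (hg : Summable fun j => g j ^ 2) :
    Real.sqrt (∑' j, (f j + g j) ^ 2) ≤ Real.sqrt (∑' j, f j ^ 2) + Real.sqrt (∑' j, g j ^ 2) := by
  set Tf := ∑' j, f j ^ 2 with hTfdef
  set Tg := ∑' j, g j ^ 2 with hTgdef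
  have hTf : 0 ≤ Tf := tsum_nonneg fun j => sq_nonneg _
  have hTg : 0 ≤ Tg := tsum_nonneg fun j => sq_nonneg _
  have habs : Summable (fun j => |f j * g j|) := by
    refine Summable.of_nonneg_of_le (fun j => abs_nonneg _) (fun j => ?_)
      ((hf.add hg).div_const 2)
    rw [abs_mul]
    nlinarith [sq_nonneg (|f j| - |g j|), sq_abs (f j), sq_abs (g j)]
  have hfg : Summable (fun j => f j * g j) := habs.of_abs
  have hcs : ∑' j, f j * g j ≤ Real.sqrt Tf * Real.sqrt Tg := by
    refine Summable.tsum_le_of_sum_le hfg fun s => ?_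
    have h1 : (∑ i ∈ s, f i * g i) ^ 2 ≤ (∑ i ∈ s, f i ^ 2) * ∑ i ∈ s, g i ^ 2 :=
      Finset.sum_mul_sq_le_sq_mul_sq s f g
    have h2 : ∑ i ∈ s, f i ^ 2 ≤ Tf := Summable.sum_le_tsum s (fun i _ => sq_nonneg _) hf
    have h3 : ∑ i ∈ s, g i ^ 2 ≤ Tg := Summable.sum_le_tsum s (fun i _ => sq_nonneg _) hg
    have h4 : 0 ≤ ∑ i ∈ s, f i ^ 2 := Finset.sum_nonneg fun i _ => sq_nonneg _
    have h5 : 0 ≤ ∑ i ∈ s, g i ^ 2 := Finset.sum_nonneg fun i _ => sq_nonneg _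
    have h6 : (∑ i ∈ s, f i ^ 2) * ∑ i ∈ s, g i ^ 2 ≤ Tf * Tg := mul_le_mul h2 h3 h5 hTf
    nlinarith [Real.sq_sqrt hTf, Real.sq_sqrt hTg, Real.sqrt_nonneg Tf, Real.sqrt_nonneg Tg,
      mul_nonneg (Real.sqrt_nonneg Tf) (Real.sqrt_nonneg Tg)]
  have hsum : Summable fun j => (f j + g j) ^ 2 := summable_sq_add hf hg
  have hexp : ∑' j, (f j + g j) ^ 2 = Tf + 2 * (∑' j, f j * g j) + Tg := by
    have : ∀ j, (f j + g j) ^ 2 = f j ^ 2 + (2 * (f j * g j) + g j ^ 2) := fun j => by ring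
    rw [tsum_congr this, Summable.tsum_add hf ((hfg.mul_left 2).add hg),
      Summable.tsum_add (hfg.mul_left 2) hg, tsum_mul_left]
    ring
  have hle : ∑' j, (f j + g j) ^ 2 ≤ (Real.sqrt Tf + Real.sqrt Tg) ^ 2 := by
    rw [hexp]
    nlinarith [Real.sq_sqrt hTf, Real.sq_sqrt hTg]
  calc Real.sqrt (∑' j, (f j + g j) ^ 2) ≤ Real.sqrt ((Real.sqrt Tf + Real.sqrt Tg) ^ 2) :=
        Real.sqrt_le_sqrt hle
    _ = Real.sqrt Tf + Real.sqrt Tg :=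
        Real.sqrt_sq (by positivity)


private lemma zbar_eq_Zfun (L k j : ℕ) (r : ℕ → ℝ) :
    zbar L k j r = Zfun L k (∑ m ∈ Finset.range j, r m) (r j) (tsumTail r j) := rfl

private def shiftSeq (f : ℕ → ℝ) : ℕ → ℝ
  | 0 => 0
  | n+1 => f n

private lemma memS_tail_eq {r : ℕ → ℝ} (hr : memS r) (j : ℕ) :
    (∑ m ∈ Finset.range (j+1), r m) + tsumTail r j = 1 := by
  obtain ⟨h0, hs, ht⟩ := hr
  have h := Summable.sum_add_tsum_nat_add (f := r) (j+1) hs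
  have h2 : tsumTail r j = ∑' i, r (i + (j+1)) :=
    tsum_congr fun m => congrArg r (Nat.add_comm _ _)
  rw [h2, h, ht]

private lemma memS_facts {r : ℕ → ℝ} (hr : memS r) (j : ℕ) :
    r j ≤ 1 ∧ (0 ≤ ∑ m ∈ Finset.range j, r m) ∧ ((∑ m ∈ Finset.range j, r m) ≤ 1)
      ∧ 0 ≤ tsumTail r j ∧ tsumTail r j ≤ 1
      ∧ (∑ m ∈ Finset.range j, r m) + r j + tsumTail r j = 1 := by
  obtain ⟨h0, hs, ht⟩ := hr
  have hkey := memS_tail_eq ⟨h0, hs, ht⟩ j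
  rw [Finset.sum_range_succ] at hkey
  have hpn : ∀ i : ℕ, 0 ≤ ∑ m ∈ Finset.range i, r m :=
    fun i => Finset.sum_nonneg fun m _ => h0 m
  have htn : 0 ≤ tsumTail r j := tsum_nonneg fun m => h0 _
  refine ⟨by nlinarith [hpn j], hpn j, by nlinarith [h0 j], htn, by nlinarith [hpn j, h0 j],
    by linarith⟩

set_option maxHeartbeats 1000000 in
/-- there is `κ ∈ (0,∞)`, depending only on `L`, `k`, `λ`, such that for all
`r, r̃ ∈ 𝒮` with `Σ_j j·r̃_j < ∞`,
`‖F(r) − F(r̃)‖₂ ≤ κ(1 + Σ_j j·r̃_j)^{1/2}‖r − r̃‖₂ + 2k‖r − r̃‖₂`. -/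
theorem Fmap_l2_bound (L k : ℕ) (hL : 1 ≤ L) (hk : 1 ≤ k) (hkL : k ≤ L)
    (lam : ℝ) (hlam : 0 < lam) :
    ∃ κ : ℝ, 0 < κ ∧ ∀ r rt : ℕ → ℝ, memS r → memS rt →
      Summable (fun j : ℕ => (j : ℝ) * rt j) →
      Real.sqrt (∑' j, (Fmap L k lam r j - Fmap L k lam rt j) ^ 2)
        ≤ κ * Real.sqrt (1 + ∑' j : ℕ, (j : ℝ) * rt j) * Real.sqrt (∑' j, (r j - rt j) ^ 2)
          + 2 * (k : ℝ) * Real.sqrt (∑' j, (r j - rt j) ^ 2) := by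
  have hL0 : (0:ℝ) < (L:ℝ) := by exact_mod_cast hL
  refine ⟨16 * lam * (L.factorial : ℝ) * (L:ℝ)^4, by positivity, ?_⟩
  intro r rt hr hrt hM
  obtain ⟨hr0, hrsum, hrtot⟩ := hr
  obtain ⟨hrt0, hrtsum, hrttot⟩ := hrt
  set M := ∑' j : ℕ, (j:ℝ) * rt j with hMdef
  set T := ∑' j : ℕ, (r j - rt j)^2 with hTdef
  have hM0 : 0 ≤ M := tsum_nonneg fun j => mul_nonneg (Nat.cast_nonneg j) (hrt0 j)
  -- summability of s²
  have hs2 : Summable (fun j => (r j - rt j)^2) := by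
    refine Summable.of_nonneg_of_le (fun j => sq_nonneg _) (fun j => ?_)
      ((hrsum.add hrtsum).mul_left 2)
    have h1 := (memS_facts ⟨hr0, hrsum, hrtot⟩ j).1
    have h2 := (memS_facts ⟨hrt0, hrtsum, hrttot⟩ j).1
    have := hr0 j; have := hrt0 j
    nlinarith
  have hT0 : 0 ≤ T := tsum_nonneg fun j => sq_nonneg _
  -- Cauchy–Schwarz partial sum bound
  have hDA : ∀ j : ℕ, (∑ m ∈ Finset.range j, (r m - rt m))^2 ≤ (j:ℝ) * T := by
    intro j
    have h1 : (∑ m ∈ Finset.range j, (r m - rt m))^2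
        ≤ (j:ℝ) * ∑ m ∈ Finset.range j, (r m - rt m)^2 := by
      have := Finset.sum_mul_sq_le_sq_mul_sq (Finset.range j) (fun _ => (1:ℝ))
        (fun m => r m - rt m)
      simpa using this
    have h2 : ∑ m ∈ Finset.range j, (r m - rt m)^2 ≤ T :=
      Summable.sum_le_tsum _ (fun i _ => sq_nonneg _) hs2
    calc (∑ m ∈ Finset.range j, (r m - rt m))^2
        ≤ (j:ℝ) * ∑ m ∈ Finset.range j, (r m - rt m)^2 := h1
      _ ≤ (j:ℝ) * T := mul_le_mul_of_nonneg_left h2 (Nat.cast_nonneg j)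
  -- pointwise zbar difference bound
  set g : ℕ → ℝ := fun j => |r j - rt j| + rt j * |∑ m ∈ Finset.range j, (r m - rt m)|
    with hgdef
  have hg0 : ∀ j, 0 ≤ g j := fun j =>
    add_nonneg (abs_nonneg _) (mul_nonneg (hrt0 j) (abs_nonneg _))
  have hDzg : ∀ j, |zbar L k j r - zbar L k j rt| ≤ (4 * (L:ℝ)^4) * g j := by
    intro j
    obtain ⟨hx1, hx2, hx3, hx4, hx5, hx6⟩ := memS_facts ⟨hr0, hrsum, hrtot⟩ j
    obtain ⟨hy1, hy2, hy3, hy4, hy5, hy6⟩ := memS_facts ⟨hrt0, hrtsum, hrttot⟩ j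
    rw [zbar_eq_Zfun, zbar_eq_Zfun]
    have hZ := Zdiff L k hkL hx2 hx3 (hr0 j) hx1 hx4 hx5 hy2 hy3 (hrt0 j) hy1 hy4 hy5
    set DA := (∑ m ∈ Finset.range j, r m) - (∑ m ∈ Finset.range j, rt m) with hDAdef
    have hDAeq : DA = ∑ m ∈ Finset.range j, (r m - rt m) := by
      rw [hDAdef, Finset.sum_sub_distrib]
    have hDB : tsumTail r j - tsumTail rt j = -(DA + (r j - rt j)) := by
      rw [hDAdef]; linarith
    have hDA1 : |DA| ≤ 1 := abs_le.2 ⟨by linarith, by linarith⟩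
    have habsB : |tsumTail r j - tsumTail rt j| ≤ |DA| + |r j - rt j| := by
      rw [hDB, abs_neg]
      exact abs_add_le _ _
    have hrle : r j ≤ rt j + |r j - rt j| := by
      have := le_abs_self (r j - rt j); linarith
    have hX : |r j - rt j| + r j * |DA| + rt j * |tsumTail r j - tsumTail rt j|
        ≤ 4 * g j := by
      have e1 : r j * |DA| ≤ rt j * |DA| + |r j - rt j| * |DA| := by
        nlinarith [abs_nonneg DA]
      have e2 : |r j - rt j| * |DA| ≤ |r j - rt j| :=
        mul_le_of_le_one_right (abs_nonneg _) hDA1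
      have e3 : rt j * |tsumTail r j - tsumTail rt j|
          ≤ rt j * (|DA| + |r j - rt j|) :=
        mul_le_mul_of_nonneg_left habsB (hrt0 j)
      have e4 : rt j * |r j - rt j| ≤ |r j - rt j| :=
        mul_le_of_le_one_left (abs_nonneg _) hy1
      simp only [hgdef, ← hDAeq]
      nlinarith [abs_nonneg DA, abs_nonneg (r j - rt j), hrt0 j]
    calc |Zfun L k (∑ m ∈ Finset.range j, r m) (r j) (tsumTail r j)
          - Zfun L k (∑ m ∈ Finset.range j, rt m) (rt j) (tsumTail rt j)|
        ≤ (L:ℝ)^4 * (|r j - rt j| + r j * |DA| + rt j * |tsumTail r j - tsumTail rt j|) := hZ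
      _ ≤ (L:ℝ)^4 * (4 * g j) := mul_le_mul_of_nonneg_left hX (by positivity)
      _ = (4 * (L:ℝ)^4) * g j := by ring
  -- square-sum bound for g
  have hg2 : ∀ j, g j ^ 2 ≤ 2 * (r j - rt j)^2 + 2 * T * ((j:ℝ) * rt j) := by
    intro j
    simp only [hgdef]
    have h1 := hDA j
    have h2 : (rt j * |∑ m ∈ Finset.range j, (r m - rt m)|)^2
        ≤ rt j * ((j:ℝ) * T) := by
      have hy1 := (memS_facts ⟨hrt0, hrtsum, hrttot⟩ j).1
      have ha : (rt j * |∑ m ∈ Finset.range j, (r m - rt m)|)^2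
          = rt j ^2 * (∑ m ∈ Finset.range j, (r m - rt m))^2 := by
        rw [mul_pow, sq_abs]
      rw [ha]
      nlinarith [hrt0 j, sq_nonneg (∑ m ∈ Finset.range j, (r m - rt m)),
        mul_le_mul_of_nonneg_left h1 (hrt0 j),
        mul_nonneg (mul_nonneg (hrt0 j) (by linarith : (0:ℝ) ≤ 1 - rt j))
          (sq_nonneg (∑ m ∈ Finset.range j, (r m - rt m)))]
    nlinarith [sq_nonneg (|r j - rt j| - rt j * |∑ m ∈ Finset.range j, (r m - rt m)|),
      sq_abs (r j - rt j)]
  have hgbound : Summable (fun j => 2 * (r j - rt j)^2 + 2 * T * ((j:ℝ) * rt j)) :=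
    (hs2.mul_left 2).add (hM.mul_left (2 * T))
  have hgsum : Summable (fun j => g j ^ 2) :=
    Summable.of_nonneg_of_le (fun j => sq_nonneg _) hg2 hgbound
  have hgT : ∑' j, g j ^ 2 ≤ 2 * (1 + M) * T := by
    have h1 : ∑' j, g j ^ 2 ≤ ∑' j, (2 * (r j - rt j)^2 + 2 * T * ((j:ℝ) * rt j)) :=
      Summable.tsum_le_tsum hg2 hgsum hgbound
    have h2 : ∑' j, (2 * (r j - rt j)^2 + 2 * T * ((j:ℝ) * rt j))
        = 2 * T + 2 * T * M := by
      rw [Summable.tsum_add (hs2.mul_left 2) (hM.mul_left (2 * T)), tsum_mul_left, tsum_mul_left,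
        ← hTdef, ← hMdef]
    rw [h2] at h1
    linarith
  -- Dz bounds
  set Dz : ℕ → ℝ := fun j => zbar L k j r - zbar L k j rt with hDzdef
  have hDzsq : ∀ j, Dz j ^ 2 ≤ (4 * (L:ℝ)^4)^2 * g j ^2 := by
    intro j
    have h := hDzg j
    have h2 : Dz j ^ 2 ≤ ((4 * (L:ℝ)^4) * g j)^2 := by
      have := abs_nonneg (Dz j)
      have hDzabs : |Dz j| ≤ (4 * (L:ℝ)^4) * g j := h
      nlinarith [sq_abs (Dz j)]
    calc Dz j ^2 ≤ ((4 * (L:ℝ)^4) * g j)^2 := h2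
      _ = (4 * (L:ℝ)^4)^2 * g j ^2 := by ring
  have hDzsum : Summable (fun j => Dz j ^ 2) :=
    Summable.of_nonneg_of_le (fun j => sq_nonneg _) hDzsq (hgsum.mul_left _)
  have hDzT : ∑' j, Dz j ^2 ≤ (8 * (L:ℝ)^4)^2 * ((1 + M) * T) := by
    have h1 : ∑' j, Dz j ^2 ≤ ∑' j, (4 * (L:ℝ)^4)^2 * g j ^2 :=
      Summable.tsum_le_tsum hDzsq hDzsum (hgsum.mul_left _)
    rw [tsum_mul_left] at h1
    have h2 : (4 * (L:ℝ)^4)^2 * ∑' j, g j ^2 ≤ (4 * (L:ℝ)^4)^2 * (2 * (1 + M) * T) :=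
      mul_le_mul_of_nonneg_left hgT (by positivity)
    nlinarith [mul_nonneg (by linarith : (0:ℝ) ≤ 1 + M) hT0, pow_pos hL0 4]
  -- shifted sequences summability and tsum identities
  have hshiftDz : Summable (fun n => (shiftSeq Dz (n+1))^2) := by
    simpa [shiftSeq] using hDzsum
  have hu2 : Summable (fun n => (shiftSeq Dz n)^2) := (summable_nat_add_iff 1).mp hshiftDz
  have hutsum : ∑' n, (shiftSeq Dz n)^2 = ∑' n, Dz n ^2 := by
    rw [Summable.tsum_eq_zero_add hu2]
    simp [shiftSeq]
  have hw2 : Summable (fun n => (r (n+1) - rt (n+1))^2) := (summable_nat_add_iff 1).mpr hs2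
  have hwT : ∑' n, (r (n+1) - rt (n+1))^2 ≤ T := by
    have := Summable.tsum_eq_zero_add hs2
    rw [hTdef, this]
    nlinarith [sq_nonneg (r 0 - rt 0)]
  set w : ℕ → ℝ := fun n => r (n+1) - rt (n+1) with hwdef
  have hshiftw : Summable (fun n => (shiftSeq w (n+1))^2) := by
    simpa [shiftSeq] using hw2
  have hz2 : Summable (fun n => (shiftSeq w n)^2) := (summable_nat_add_iff 1).mp hshiftw
  have hztsum : ∑' n, (shiftSeq w n)^2 = ∑' n, w n ^2 := by
    rw [Summable.tsum_eq_zero_add hz2]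
    simp [shiftSeq]
  -- decomposition of F difference
  set c : ℝ := lam * (L.factorial : ℝ) with hcdef
  have hc0 : 0 < c := by positivity
  have hdec : ∀ j, Fmap L k lam r j - Fmap L k lam rt j
      = ((c * shiftSeq Dz j + -(c * Dz j)) + (k:ℝ) * w j) + -((k:ℝ) * shiftSeq w j) := by
    intro j
    cases j with
    | zero =>
      simp only [Fmap, hDzdef, hwdef, shiftSeq, hcdef]
      ring
    | succ m =>
      simp only [Fmap, hDzdef, hwdef, shiftSeq, hcdef]
      ring
  -- summability of the four squared pieces
  have hS1 : Summable (fun j => (c * shiftSeq Dz j)^2) := by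
    simpa [mul_pow] using hu2.mul_left (c^2)
  have hS2 : Summable (fun j => (-(c * Dz j))^2) := by
    simpa [mul_pow, neg_sq] using hDzsum.mul_left (c^2)
  have hS3 : Summable (fun j => ((k:ℝ) * w j)^2) := by
    simpa [mul_pow] using hw2.mul_left ((k:ℝ)^2)
  have hS4 : Summable (fun j => (-((k:ℝ) * shiftSeq w j))^2) := by
    simpa [mul_pow, neg_sq] using hz2.mul_left ((k:ℝ)^2)
  -- rewrite LHS
  have hLHS : (∑' j, (Fmap L k lam r j - Fmap L k lam rt j)^2)
      = ∑' j, (((c * shiftSeq Dz j + -(c * Dz j)) + (k:ℝ) * w j)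
          + -((k:ℝ) * shiftSeq w j))^2 :=
    tsum_congr fun j => by rw [hdec j]
  -- Minkowski three times
  have m1 : Real.sqrt (∑' j, (((c * shiftSeq Dz j + -(c * Dz j)) + (k:ℝ) * w j)
          + -((k:ℝ) * shiftSeq w j))^2)
      ≤ Real.sqrt (∑' j, ((c * shiftSeq Dz j + -(c * Dz j)) + (k:ℝ) * w j)^2)
        + Real.sqrt (∑' j, (-((k:ℝ) * shiftSeq w j))^2) :=
    minkowski (summable_sq_add (summable_sq_add hS1 hS2) hS3) hS4
  have m2 : Real.sqrt (∑' j, ((c * shiftSeq Dz j + -(c * Dz j)) + (k:ℝ) * w j)^2)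
      ≤ Real.sqrt (∑' j, (c * shiftSeq Dz j + -(c * Dz j))^2)
        + Real.sqrt (∑' j, ((k:ℝ) * w j)^2) :=
    minkowski (summable_sq_add hS1 hS2) hS3
  have m3 : Real.sqrt (∑' j, (c * shiftSeq Dz j + -(c * Dz j))^2)
      ≤ Real.sqrt (∑' j, (c * shiftSeq Dz j)^2) + Real.sqrt (∑' j, (-(c * Dz j))^2) :=
    minkowski hS1 hS2
  -- evaluate the four pieces
  have key : ∀ (d : ℝ) (f : ℕ → ℝ), (∑' j, (d * f j)^2) = d^2 * ∑' j, f j ^2 := by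
    intro d f
    rw [← tsum_mul_left]
    exact tsum_congr fun j => by ring
  have h1M : (0:ℝ) ≤ 1 + M := by linarith
  set E := Real.sqrt ((1 + M) * T) with hEdef
  have hsq : Real.sqrt (c^2 * ((8*(L:ℝ)^4)^2 * ((1+M)*T))) = c * (8*(L:ℝ)^4) * E := by
    rw [show c^2 * ((8*(L:ℝ)^4)^2 * ((1+M)*T)) = (c*(8*(L:ℝ)^4))^2 * ((1+M)*T) by ring,
      Real.sqrt_mul (by positivity), Real.sqrt_sq (by positivity), hEdef]
  have p1 : Real.sqrt (∑' j, (c * shiftSeq Dz j)^2) ≤ c * (8*(L:ℝ)^4) * E := by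
    rw [← hsq]
    refine Real.sqrt_le_sqrt ?_
    rw [key c (shiftSeq Dz), hutsum]
    exact mul_le_mul_of_nonneg_left hDzT (sq_nonneg c)
  have p2 : Real.sqrt (∑' j, (-(c * Dz j))^2) ≤ c * (8*(L:ℝ)^4) * E := by
    rw [← hsq]
    refine Real.sqrt_le_sqrt ?_
    have hneg : (∑' j, (-(c * Dz j))^2) = ∑' j, (c * Dz j)^2 :=
      tsum_congr fun j => neg_sq _
    rw [hneg, key c Dz]
    exact mul_le_mul_of_nonneg_left hDzT (sq_nonneg c)
  have hsqk : Real.sqrt ((k:ℝ)^2 * T) = (k:ℝ) * Real.sqrt T := by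
    rw [Real.sqrt_mul (by positivity), Real.sqrt_sq (by positivity)]
  have p3 : Real.sqrt (∑' j, ((k:ℝ) * w j)^2) ≤ (k:ℝ) * Real.sqrt T := by
    rw [← hsqk]
    refine Real.sqrt_le_sqrt ?_
    rw [key (k:ℝ) w]
    exact mul_le_mul_of_nonneg_left hwT (sq_nonneg _)
  have p4 : Real.sqrt (∑' j, (-((k:ℝ) * shiftSeq w j))^2) ≤ (k:ℝ) * Real.sqrt T := by
    rw [← hsqk]
    refine Real.sqrt_le_sqrt ?_
    have hneg : (∑' j, (-((k:ℝ) * shiftSeq w j))^2) = ∑' j, ((k:ℝ) * shiftSeq w j)^2 :=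
      tsum_congr fun j => neg_sq _
    rw [hneg, key (k:ℝ) (shiftSeq w), hztsum]
    exact mul_le_mul_of_nonneg_left hwT (sq_nonneg _)
  have hfinal : Real.sqrt (∑' j, (Fmap L k lam r j - Fmap L k lam rt j)^2)
      ≤ 2 * (c * (8*(L:ℝ)^4)) * E + 2 * ((k:ℝ) * Real.sqrt T) := by
    rw [hLHS]
    linarith [m1, m2, m3, p1, p2, p3, p4]
  have hEeq : E = Real.sqrt (1 + M) * Real.sqrt T := by
    rw [hEdef, Real.sqrt_mul h1M]
  rw [hEeq] at hfinal
  have hconst : 2 * (c * (8*(L:ℝ)^4)) * (Real.sqrt (1 + M) * Real.sqrt T)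
      = 16 * lam * (L.factorial : ℝ) * (L:ℝ)^4 * Real.sqrt (1 + M) * Real.sqrt T := by
    rw [hcdef]; ring
  calc Real.sqrt (∑' j, (Fmap L k lam r j - Fmap L k lam rt j)^2)
      ≤ 2 * (c * (8*(L:ℝ)^4)) * (Real.sqrt (1 + M) * Real.sqrt T)
        + 2 * ((k:ℝ) * Real.sqrt T) := hfinal
    _ = 16 * lam * (L.factorial : ℝ) * (L:ℝ)^4 * Real.sqrt (1 + M) * Real.sqrt T
        + 2 * (k:ℝ) * Real.sqrt T := by rw [hconst]; ring
end
end
end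

section
/- For each M ∈ (0,∞) the map F is Lipschitz from 𝒱_M to ℓ²: there exists a constant C(M) ∈ (0,∞) such that for all r, r̃ ∈ 𝒱_M, ‖F(r) − F(r̃)‖₂ ≤ C(M) · ‖r − r̃‖₂. -/
noncomputable section

open scoped BigOperators

/-- Membership in `𝒱_M = {r ∈ 𝒮 : Σ_i i·r_i ≤ M}`. -/
def memV (M : ℝ) (r : ℕ → ℝ) : Prop :=
  memS r ∧ Summable (fun i : ℕ => (i : ℝ) * r i) ∧ (∑' i : ℕ, (i : ℝ) * r i) ≤ M

/- helper lemmas -/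

lemma abs_pow_sub_pow_le' {u v : ℝ} (hu0 : 0 ≤ u) (hu1 : u ≤ 1) (hv0 : 0 ≤ v) (hv1 : v ≤ 1)
    (n : ℕ) : |u ^ n - v ^ n| ≤ (n : ℝ) * |u - v| := by
  induction n with
  | zero => simp
  | succ m ih =>
    have h1 : u ^ (m + 1) - v ^ (m + 1) = u ^ m * (u - v) + v * (u ^ m - v ^ m) := by ring
    rw [h1]
    calc |u ^ m * (u - v) + v * (u ^ m - v ^ m)|
        ≤ |u ^ m * (u - v)| + |v * (u ^ m - v ^ m)| := abs_add_le _ _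
      _ = u ^ m * |u - v| + v * |u ^ m - v ^ m| := by
          rw [abs_mul, abs_mul, abs_of_nonneg (pow_nonneg hu0 m), abs_of_nonneg hv0]
      _ ≤ 1 * |u - v| + 1 * ((m : ℝ) * |u - v|) := by
          refine add_le_add (mul_le_mul_of_nonneg_right (pow_le_one₀ hu0 hu1) (abs_nonneg _)) ?_
          exact mul_le_mul hv1 ih (abs_nonneg _) zero_le_one
      _ = ((m : ℝ) + 1) * |u - v| := by ring
      _ = ((m + 1 : ℕ) : ℝ) * |u - v| := by push_cast; ring

lemma mono_diff_bound {A x B A' x' B' : ℝ}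
    (hA0 : 0 ≤ A) (hA1 : A ≤ 1) (hx0 : 0 ≤ x) (hx1 : x ≤ 1) (hB0 : 0 ≤ B) (hB1 : B ≤ 1)
    (hA0' : 0 ≤ A') (hA1' : A' ≤ 1) (hx0' : 0 ≤ x') (hx1' : x' ≤ 1) (hB0' : 0 ≤ B')
    (hB1' : B' ≤ 1) (a b n : ℕ) (hb : 1 ≤ b) :
    |A ^ a * (x ^ b * B ^ n) - A' ^ a * (x' ^ b * B' ^ n)| ≤
      (a : ℝ) * (x * |A - A'|) + (b : ℝ) * |x - x'| + (n : ℝ) * (x' * |B - B'|) := by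
  have key : A ^ a * (x ^ b * B ^ n) - A' ^ a * (x' ^ b * B' ^ n) =
      (A ^ a - A' ^ a) * (x ^ b * B ^ n) + A' ^ a * ((x ^ b - x' ^ b) * B ^ n)
        + A' ^ a * (x' ^ b * (B ^ n - B' ^ n)) := by ring
  rw [key]
  have hxb : x ^ b ≤ x := by
    calc x ^ b ≤ x ^ 1 := pow_le_pow_of_le_one hx0 hx1 hb
    _ = x := pow_one x
  have hxb' : x' ^ b ≤ x' := by
    calc x' ^ b ≤ x' ^ 1 := pow_le_pow_of_le_one hx0' hx1' hb
    _ = x' := pow_one x'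
  have hBn : B ^ n ≤ 1 := pow_le_one₀ hB0 hB1
  have hAa' : A' ^ a ≤ 1 := pow_le_one₀ hA0' hA1'
  calc |(A ^ a - A' ^ a) * (x ^ b * B ^ n) + A' ^ a * ((x ^ b - x' ^ b) * B ^ n)
        + A' ^ a * (x' ^ b * (B ^ n - B' ^ n))|
      ≤ |(A ^ a - A' ^ a) * (x ^ b * B ^ n)| + |A' ^ a * ((x ^ b - x' ^ b) * B ^ n)|
        + |A' ^ a * (x' ^ b * (B ^ n - B' ^ n))| := abs_add_three _ _ _
    _ ≤ ((a : ℝ) * |A - A'|) * x + 1 * (((b : ℝ) * |x - x'|) * 1)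
        + 1 * (x' * ((n : ℝ) * |B - B'|)) := by
        refine add_le_add (add_le_add ?_ ?_) ?_
        · rw [abs_mul]
          refine mul_le_mul (abs_pow_sub_pow_le' hA0 hA1 hA0' hA1' a) ?_ (abs_nonneg _)
            (by positivity)
          rw [abs_of_nonneg (by positivity)]
          calc x ^ b * B ^ n ≤ x ^ b * 1 := by
                exact mul_le_mul_of_nonneg_left hBn (by positivity)
            _ = x ^ b := mul_one _
            _ ≤ x := hxb
        · rw [abs_mul, abs_mul]
          refine mul_le_mul ?_ ?_ (by positivity) zero_le_one
          · rw [abs_of_nonneg (by positivity)]; exact hAa'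
          · refine mul_le_mul (abs_pow_sub_pow_le' hx0 hx1 hx0' hx1' b) ?_ (abs_nonneg _)
              (by positivity)
            rw [abs_of_nonneg (by positivity)]; exact hBn
        · rw [abs_mul, abs_mul]
          refine mul_le_mul ?_ ?_ (by positivity) zero_le_one
          · rw [abs_of_nonneg (by positivity)]; exact hAa'
          · refine mul_le_mul ?_ (abs_pow_sub_pow_le' hB0 hB1 hB0' hB1' n) (abs_nonneg _) hx0'
            rw [abs_of_nonneg (by positivity)]; exact hxb'
    _ ≤ (a : ℝ) * (x * |A - A'|) + (b : ℝ) * |x - x'| + (n : ℝ) * (x' * |B - B'|) := by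
        rw [one_mul, one_mul, mul_one]
        have h1 : ((a : ℝ) * |A - A'|) * x = (a : ℝ) * (x * |A - A'|) := by ring
        have h2 : x' * ((n : ℝ) * |B - B'|) = (n : ℝ) * (x' * |B - B'|) := by ring
        rw [h1, h2]

lemma zbar_diff_bound (L k : ℕ) (hkL : k ≤ L) (r rt : ℕ → ℝ) (j : ℕ)
    (hA0 : 0 ≤ ∑ m ∈ Finset.range j, r m) (hA1 : ∑ m ∈ Finset.range j, r m ≤ 1)
    (hx0 : 0 ≤ r j) (hx1 : r j ≤ 1)
    (hB0 : 0 ≤ tsumTail r j) (hB1 : tsumTail r j ≤ 1)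
    (hA0' : 0 ≤ ∑ m ∈ Finset.range j, rt m) (hA1' : ∑ m ∈ Finset.range j, rt m ≤ 1)
    (hx0' : 0 ≤ rt j) (hx1' : rt j ≤ 1)
    (hB0' : 0 ≤ tsumTail rt j) (hB1' : tsumTail rt j ≤ 1) :
    |zbar L k j r - zbar L k j rt| ≤
      (k : ℝ) ^ 2 * (L : ℝ) ^ 2 *
        (r j * |(∑ m ∈ Finset.range j, r m) - ∑ m ∈ Finset.range j, rt m|
          + |r j - rt j| + rt j * |tsumTail r j - tsumTail rt j|) := by
  set A := ∑ m ∈ Finset.range j, r m with hA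
  set A' := ∑ m ∈ Finset.range j, rt m with hA'
  set x := r j
  set x' := rt j
  set B := tsumTail r j
  set B' := tsumTail rt j
  set base : ℝ := x * |A - A'| + |x - x'| + x' * |B - B'| with hbase
  have hbase0 : 0 ≤ base := by positivity
  have key : ∀ i₁ ∈ Finset.range k, ∀ i₂ ∈ Finset.Icc 1 (L - i₁),
      |(A ^ i₁ / (i₁.factorial : ℝ)) *
          ((min (i₂:ℝ) ((k:ℝ) - (i₁:ℝ))) * (x ^ i₂ / (i₂.factorial : ℝ)) *
            (B ^ (L - i₁ - i₂) / ((L - i₁ - i₂).factorial : ℝ)))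
        - (A' ^ i₁ / (i₁.factorial : ℝ)) *
          ((min (i₂:ℝ) ((k:ℝ) - (i₁:ℝ))) * (x' ^ i₂ / (i₂.factorial : ℝ)) *
            (B' ^ (L - i₁ - i₂) / ((L - i₁ - i₂).factorial : ℝ)))|
        ≤ (k : ℝ) * ((L : ℝ) * base) := by
    intro i₁ hi₁ i₂ hi₂
    rw [Finset.mem_range] at hi₁
    rw [Finset.mem_Icc] at hi₂
    set n := L - i₁ - i₂ with hn
    have hi₁k : (i₁ : ℝ) ≤ (k : ℝ) := by exact_mod_cast hi₁.le
    have hmin0 : 0 ≤ min (i₂:ℝ) ((k:ℝ) - (i₁:ℝ)) := by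
      refine le_min (by positivity) (by linarith)
    have hmink : min (i₂:ℝ) ((k:ℝ) - (i₁:ℝ)) ≤ (k : ℝ) := by
      refine (min_le_right _ _).trans (by linarith [show (0:ℝ) ≤ (i₁:ℝ) from by positivity])
    set c : ℝ := (min (i₂:ℝ) ((k:ℝ) - (i₁:ℝ))) / ((i₁.factorial : ℝ) * (i₂.factorial : ℝ) *
      (n.factorial : ℝ)) with hc
    have hfact : (1 : ℝ) ≤ (i₁.factorial : ℝ) * (i₂.factorial : ℝ) * (n.factorial : ℝ) := by
      have h1 : (1 : ℝ) ≤ (i₁.factorial : ℝ) := by exact_mod_cast i₁.factorial_pos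
      have h2 : (1 : ℝ) ≤ (i₂.factorial : ℝ) := by exact_mod_cast i₂.factorial_pos
      have h3 : (1 : ℝ) ≤ (n.factorial : ℝ) := by exact_mod_cast n.factorial_pos
      have h12 : (1 : ℝ) ≤ (i₁.factorial : ℝ) * (i₂.factorial : ℝ) := by nlinarith
      calc (1:ℝ) = 1 * 1 := by ring
      _ ≤ ((i₁.factorial : ℝ) * (i₂.factorial : ℝ)) * (n.factorial : ℝ) :=
        mul_le_mul h12 h3 zero_le_one (by linarith)
    have hc0 : 0 ≤ c := by
      rw [hc]; exact div_nonneg hmin0 (by linarith)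
    have hck : c ≤ (k : ℝ) := by
      have h1 : c ≤ min (i₂:ℝ) ((k:ℝ) - (i₁:ℝ)) := div_le_self hmin0 hfact
      exact h1.trans hmink
    have hsplit : (A ^ i₁ / (i₁.factorial : ℝ)) *
          ((min (i₂:ℝ) ((k:ℝ) - (i₁:ℝ))) * (x ^ i₂ / (i₂.factorial : ℝ)) *
            (B ^ n / (n.factorial : ℝ)))
        - (A' ^ i₁ / (i₁.factorial : ℝ)) *
          ((min (i₂:ℝ) ((k:ℝ) - (i₁:ℝ))) * (x' ^ i₂ / (i₂.factorial : ℝ)) *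
            (B' ^ n / (n.factorial : ℝ)))
        = c * (A ^ i₁ * (x ^ i₂ * B ^ n) - A' ^ i₁ * (x' ^ i₂ * B' ^ n)) := by
      rw [hc]; ring
    rw [hsplit, abs_mul, abs_of_nonneg hc0]
    have hmono := mono_diff_bound hA0 hA1 hx0 hx1 hB0 hB1 hA0' hA1' hx0' hx1' hB0' hB1'
      i₁ i₂ n hi₂.1
    have hi₁L : (i₁ : ℝ) ≤ (L : ℝ) := by exact_mod_cast (le_of_lt hi₁).trans hkL
    have hi₂L : (i₂ : ℝ) ≤ (L : ℝ) := by
      exact_mod_cast hi₂.2.trans (Nat.sub_le L i₁)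
    have hnL : (n : ℝ) ≤ (L : ℝ) := by
      exact_mod_cast (Nat.sub_le _ _).trans (Nat.sub_le L i₁)
    have hbd : |A ^ i₁ * (x ^ i₂ * B ^ n) - A' ^ i₁ * (x' ^ i₂ * B' ^ n)| ≤ (L : ℝ) * base := by
      refine hmono.trans ?_
      rw [hbase]
      have t1 : (i₁ : ℝ) * (x * |A - A'|) ≤ (L : ℝ) * (x * |A - A'|) :=
        mul_le_mul_of_nonneg_right hi₁L (by positivity)
      have t2 : (i₂ : ℝ) * |x - x'| ≤ (L : ℝ) * |x - x'| :=
        mul_le_mul_of_nonneg_right hi₂L (abs_nonneg _)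
      have t3 : (n : ℝ) * (x' * |B - B'|) ≤ (L : ℝ) * (x' * |B - B'|) :=
        mul_le_mul_of_nonneg_right hnL (by positivity)
      have hsum : (L:ℝ)*(x*|A - A'|) + (L:ℝ)*|x - x'| + (L:ℝ)*(x'*|B - B'|)
          = (L:ℝ) * (x * |A - A'| + |x - x'| + x' * |B - B'|) := by ring
      linarith [t1, t2, t3]
    exact mul_le_mul hck hbd (abs_nonneg _) (by positivity)
  -- now sum up
  simp only [zbar]
  rw [← hA, ← hA']
  simp only [Finset.mul_sum]
  rw [← Finset.sum_sub_distrib]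
  refine (Finset.abs_sum_le_sum_abs _ _).trans ?_
  have step1 : ∀ i₁ ∈ Finset.range k,
      |(∑ i₂ ∈ Finset.Icc 1 (L - i₁),
          (A ^ i₁ / (i₁.factorial : ℝ)) *
            ((min (i₂:ℝ) ((k:ℝ) - (i₁:ℝ))) * (x ^ i₂ / (i₂.factorial : ℝ)) *
              (B ^ (L - i₁ - i₂) / ((L - i₁ - i₂).factorial : ℝ))))
        - ∑ i₂ ∈ Finset.Icc 1 (L - i₁),
          (A' ^ i₁ / (i₁.factorial : ℝ)) *
            ((min (i₂:ℝ) ((k:ℝ) - (i₁:ℝ))) * (x' ^ i₂ / (i₂.factorial : ℝ)) *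
              (B' ^ (L - i₁ - i₂) / ((L - i₁ - i₂).factorial : ℝ)))|
        ≤ (L : ℝ) * ((k : ℝ) * ((L : ℝ) * base)) := by
    intro i₁ hi₁
    rw [← Finset.sum_sub_distrib]
    refine (Finset.abs_sum_le_sum_abs _ _).trans ?_
    have := Finset.sum_le_card_nsmul (Finset.Icc 1 (L - i₁)) _ ((k : ℝ) * ((L : ℝ) * base))
      (fun i₂ hi₂ => key i₁ hi₁ i₂ hi₂)
    rw [Nat.card_Icc, nsmul_eq_mul] at this
    refine this.trans ?_
    have hcard : ((L - i₁ + 1 - 1 : ℕ) : ℝ) ≤ (L : ℝ) := by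
      exact_mod_cast by omega
    exact mul_le_mul_of_nonneg_right hcard (by positivity)
  refine (Finset.sum_le_card_nsmul _ _ _ step1).trans ?_
  rw [Finset.card_range, nsmul_eq_mul]
  have : (k : ℝ) * ((L : ℝ) * ((k : ℝ) * ((L : ℝ) * base))) =
      (k : ℝ) ^ 2 * (L : ℝ) ^ 2 * base := by ring
  rw [this]

lemma memS_le_one {r : ℕ → ℝ} (h : memS r) (j : ℕ) : r j ≤ 1 := by
  have := Summable.le_tsum h.2.1 j (fun i _ => h.1 i)
  rw [h.2.2] at this; exact this

lemma memS_sum_le_one {r : ℕ → ℝ} (h : memS r) (j : ℕ) :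
    ∑ m ∈ Finset.range j, r m ≤ 1 := by
  have := Summable.sum_le_tsum (Finset.range j) (fun i _ => h.1 i) h.2.1
  rw [h.2.2] at this; exact this

lemma four_sq_le (a b c d : ℝ) : (a + b + c + d) ^ 2 ≤ 4 * (a ^ 2 + b ^ 2 + c ^ 2 + d ^ 2) := by
  nlinarith [sq_nonneg (a - b), sq_nonneg (a - c), sq_nonneg (a - d), sq_nonneg (b - c),
    sq_nonneg (b - d), sq_nonneg (c - d)]

set_option maxHeartbeats 2000000 in
/-- for each `M ∈ (0,∞)` the map `F` is Lipschitz from `𝒱_M` to `ℓ²`: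
there is `C(M) ∈ (0,∞)` with `‖F(r) − F(r̃)‖₂ ≤ C(M)‖r − r̃‖₂` for all `r, r̃ ∈ 𝒱_M`. -/
theorem Fmap_lipschitz_l2_on_VM (L k : ℕ) (hL : 1 ≤ L) (hk : 1 ≤ k) (hkL : k ≤ L)
    (lam : ℝ) (hlam : 0 < lam) (M : ℝ) (hM : 0 < M) :
    ∃ C : ℝ, 0 < C ∧ ∀ r rt : ℕ → ℝ, memV M r → memV M rt →
      Real.sqrt (∑' j, (Fmap L k lam r j - Fmap L k lam rt j) ^ 2)
        ≤ C * Real.sqrt (∑' j, (r j - rt j) ^ 2) := by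
  have hkR : (0 : ℝ) < (k : ℝ) := by exact_mod_cast hk
  have hLR : (0 : ℝ) < (L : ℝ) := by exact_mod_cast hL
  set Lf : ℝ := (L.factorial : ℝ) with hLf
  have hLf0 : 0 < Lf := by rw [hLf]; exact_mod_cast L.factorial_pos
  set K₁ : ℝ := (k : ℝ) ^ 2 * (L : ℝ) ^ 2 with hK₁
  have hK₁0 : 0 < K₁ := by positivity
  set K₂ : ℝ := 8 * K₁ ^ 2 * (M + 2) with hK₂
  have hK₂0 : 0 < K₂ := by positivity
  set Cc : ℝ := 8 * (lam * Lf) ^ 2 * K₂ + 8 * (k : ℝ) ^ 2 with hCc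
  have hCc0 : 0 < Cc := by positivity
  clear_value Lf K₁ K₂ Cc
  refine ⟨Real.sqrt Cc, Real.sqrt_pos.2 hCc0, ?_⟩
  intro r rt hrV hrtV
  obtain ⟨hrS, hjr, hjrM⟩ := hrV
  obtain ⟨hrtS, hjrt, hjrtM⟩ := hrtV
  have hr0 := hrS.1
  have hrt0 := hrtS.1
  have hrs := hrS.2.1
  have hrts := hrtS.2.1
  have hr_le1 := memS_le_one hrS
  have hrt_le1 := memS_le_one hrtS
  set Q : ℝ := ∑' j, (r j - rt j) ^ 2 with hQdef
  have hQ0 : 0 ≤ Q := tsum_nonneg fun j => sq_nonneg _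
  -- summability basics
  have hrsq : Summable (fun j => r j ^ 2) :=
    Summable.of_nonneg_of_le (fun j => sq_nonneg _)
      (fun j => by nlinarith [hr0 j, hr_le1 j]) hrs
  have hrtsq : Summable (fun j => rt j ^ 2) :=
    Summable.of_nonneg_of_le (fun j => sq_nonneg _)
      (fun j => by nlinarith [hrt0 j, hrt_le1 j]) hrts
  have hd2 : Summable (fun j => (r j - rt j) ^ 2) := by
    refine Summable.of_nonneg_of_le (fun j => sq_nonneg _)
      (fun j => ?_) (((hrsq.add hrtsq)).mul_left 2)
    nlinarith [sq_nonneg (r j + rt j)]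
  -- Cauchy-Schwarz bound on partial sums of differences
  have hE2 : ∀ j : ℕ, (∑ m ∈ Finset.range (j + 1), (r m - rt m)) ^ 2 ≤ ((j : ℝ) + 1) * Q := by
    intro j
    have h1 : (∑ m ∈ Finset.range (j + 1), (r m - rt m)) ^ 2 ≤
        ((Finset.range (j + 1)).card : ℝ) * ∑ m ∈ Finset.range (j + 1), (r m - rt m) ^ 2 :=
      sq_sum_le_card_mul_sum_sq
    have h2 : ∑ m ∈ Finset.range (j + 1), (r m - rt m) ^ 2 ≤ Q :=
      Summable.sum_le_tsum _ (fun i _ => sq_nonneg _) hd2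
    rw [Finset.card_range] at h1
    have h3 : ((j + 1 : ℕ) : ℝ) * ∑ m ∈ Finset.range (j + 1), (r m - rt m) ^ 2 ≤
        ((j : ℝ) + 1) * Q := by
      push_cast
      exact mul_le_mul_of_nonneg_left h2 (by positivity)
    exact h1.trans h3
  -- the pointwise bound on zbar differences, squared
  set g : ℕ → ℝ := fun j =>
    (4 * K₁ ^ 2 * Q) * (((j : ℝ) + 1) * (r j ^ 2 + rt j ^ 2))
      + (8 * K₁ ^ 2) * (r j - rt j) ^ 2 with hg
  have key : ∀ j : ℕ, (zbar L k j r - zbar L k j rt) ^ 2 ≤ g j := by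
    intro j
    set e : ℝ := |∑ m ∈ Finset.range (j + 1), (r m - rt m)| with he
    set w : ℝ := |r j - rt j| with hw
    have e0 : 0 ≤ e := abs_nonneg _
    have w0 : 0 ≤ w := abs_nonneg _
    clear_value e w
    have hb := zbar_diff_bound L k hkL r rt j
      (Finset.sum_nonneg fun m _ => hr0 m) (memS_sum_le_one hrS j)
      (hr0 j) (hr_le1 j)
      (by rw [tsumTail_eq hrS j]; linarith [memS_sum_le_one hrS (j + 1)])
      (by rw [tsumTail_eq hrS j]
          have h0 : (0:ℝ) ≤ ∑ m ∈ Finset.range (j+1), r m :=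
            Finset.sum_nonneg fun m _ => hr0 m
          linarith)
      (Finset.sum_nonneg fun m _ => hrt0 m) (memS_sum_le_one hrtS j)
      (hrt0 j) (hrt_le1 j)
      (by rw [tsumTail_eq hrtS j]; linarith [memS_sum_le_one hrtS (j + 1)])
      (by rw [tsumTail_eq hrtS j]
          have h0 : (0:ℝ) ≤ ∑ m ∈ Finset.range (j+1), rt m :=
            Finset.sum_nonneg fun m _ => hrt0 m
          linarith)
    have hPA : |(∑ m ∈ Finset.range j, r m) - ∑ m ∈ Finset.range j, rt m| ≤ e + w := by
      have hsplit : (∑ m ∈ Finset.range j, r m) - ∑ m ∈ Finset.range j, rt m =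
          (∑ m ∈ Finset.range (j + 1), (r m - rt m)) - (r j - rt j) := by
        rw [Finset.sum_range_succ, Finset.sum_sub_distrib]; ring
      rw [hsplit]
      exact (abs_sub _ _).trans (by rw [he, hw])
    have hPB : |tsumTail r j - tsumTail rt j| = e := by
      rw [tsumTail_eq hrS j, tsumTail_eq hrtS j]
      have hsplit : (1 - ∑ m ∈ Finset.range (j + 1), r m)
          - (1 - ∑ m ∈ Finset.range (j + 1), rt m)
          = -(∑ m ∈ Finset.range (j + 1), (r m - rt m)) := by
        rw [Finset.sum_sub_distrib]; ring
      rw [hsplit, abs_neg, he]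
    rw [← hK₁] at hb
    have h1 : |zbar L k j r - zbar L k j rt| ≤ K₁ * ((r j + rt j) * e + 2 * w) := by
      refine hb.trans ?_
      rw [hPB]
      refine mul_le_mul_of_nonneg_left ?_ (le_of_lt hK₁0)
      have t1 : r j * |(∑ m ∈ Finset.range j, r m) - ∑ m ∈ Finset.range j, rt m|
          ≤ r j * (e + w) := mul_le_mul_of_nonneg_left hPA (hr0 j)
      nlinarith [t1, mul_nonneg (sub_nonneg.2 (hr_le1 j)) w0, hr0 j, hrt0 j, e0, w0]
    have h2 : (zbar L k j r - zbar L k j rt) ^ 2 ≤ (K₁ * ((r j + rt j) * e + 2 * w)) ^ 2 := by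
      have := pow_le_pow_left₀ (abs_nonneg _) h1 2
      rwa [sq_abs] at this
    have h3 : (K₁ * ((r j + rt j) * e + 2 * w)) ^ 2
        ≤ K₁ ^ 2 * (2 * ((r j + rt j) ^ 2 * e ^ 2) + 8 * w ^ 2) := by
      have ht : ((r j + rt j) * e + 2 * w) ^ 2
          ≤ 2 * ((r j + rt j) ^ 2 * e ^ 2) + 8 * w ^ 2 := by
        nlinarith [sq_nonneg ((r j + rt j) * e - 2 * w)]
      calc (K₁ * ((r j + rt j) * e + 2 * w)) ^ 2
          = K₁ ^ 2 * ((r j + rt j) * e + 2 * w) ^ 2 := by ring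
        _ ≤ K₁ ^ 2 * (2 * ((r j + rt j) ^ 2 * e ^ 2) + 8 * w ^ 2) :=
          mul_le_mul_of_nonneg_left ht (sq_nonneg K₁)
    have h4 : (r j + rt j) ^ 2 * e ^ 2 ≤ (2 * (r j ^ 2 + rt j ^ 2)) * (((j : ℝ) + 1) * Q) := by
      refine mul_le_mul (by nlinarith [sq_nonneg (r j - rt j)]) ?_ (sq_nonneg e)
        (by positivity)
      rw [he, sq_abs]; exact hE2 j
    have h4' : K₁ ^ 2 * (2 * ((r j + rt j) ^ 2 * e ^ 2) + 8 * w ^ 2)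
        ≤ K₁ ^ 2 * (2 * ((2 * (r j ^ 2 + rt j ^ 2)) * (((j : ℝ) + 1) * Q)) + 8 * w ^ 2) := by
      refine mul_le_mul_of_nonneg_left ?_ (sq_nonneg K₁)
      linarith [h4]
    have h5 : (zbar L k j r - zbar L k j rt) ^ 2
        ≤ K₁ ^ 2 * (2 * ((2 * (r j ^ 2 + rt j ^ 2)) * (((j : ℝ) + 1) * Q)) + 8 * w ^ 2) :=
      (h2.trans h3).trans h4'
    refine h5.trans (le_of_eq ?_)
    rw [hg]
    simp only []
    rw [hw, sq_abs]
    ring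
  -- summability of the majorant g
  have hmaj : Summable (fun j : ℕ => ((j : ℝ) + 1) * (r j + rt j)) := by
    have : (fun j : ℕ => ((j : ℝ) + 1) * (r j + rt j)) =
        fun j : ℕ => ((j : ℝ) * r j + r j) + ((j : ℝ) * rt j + rt j) := by
      funext j; ring
    rw [this]
    exact (hjr.add hrs).add (hjrt.add hrts)
  have hS1 : Summable (fun j : ℕ => ((j : ℝ) + 1) * (r j ^ 2 + rt j ^ 2)) := by
    refine Summable.of_nonneg_of_le (fun j => by positivity) (fun j => ?_) hmaj
    have hb1 : r j ^ 2 ≤ r j := by nlinarith [hr0 j, hr_le1 j]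
    have hb2 : rt j ^ 2 ≤ rt j := by nlinarith [hrt0 j, hrt_le1 j]
    have : (0:ℝ) ≤ (j : ℝ) + 1 := by positivity
    nlinarith [this]
  have hgs : Summable g := by
    rw [hg]
    exact (hS1.mul_left _).add (hd2.mul_left _)
  have hHsq : Summable (fun j => (zbar L k j r - zbar L k j rt) ^ 2) :=
    Summable.of_nonneg_of_le (fun j => sq_nonneg _) key hgs
  -- bound on the total zbar-difference square sum
  have hS1sum : ∑' j : ℕ, ((j : ℝ) + 1) * (r j ^ 2 + rt j ^ 2) ≤ 2 * (M + 1) := by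
    have h1 : ∑' j : ℕ, ((j : ℝ) + 1) * (r j ^ 2 + rt j ^ 2) ≤
        ∑' j : ℕ, ((j : ℝ) + 1) * (r j + rt j) := by
      refine Summable.tsum_le_tsum (fun j => ?_) hS1 hmaj
      have hb1 : r j ^ 2 ≤ r j := by nlinarith [hr0 j, hr_le1 j]
      have hb2 : rt j ^ 2 ≤ rt j := by nlinarith [hrt0 j, hrt_le1 j]
      have : (0:ℝ) ≤ (j : ℝ) + 1 := by positivity
      nlinarith [this]
    have h2 : ∑' j : ℕ, ((j : ℝ) + 1) * (r j + rt j) =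
        (∑' j : ℕ, (j : ℝ) * r j + ∑' j, r j) + (∑' j : ℕ, (j : ℝ) * rt j + ∑' j, rt j) := by
      have hfun : (fun j : ℕ => ((j : ℝ) + 1) * (r j + rt j)) =
          fun j : ℕ => ((j : ℝ) * r j + r j) + ((j : ℝ) * rt j + rt j) := by
        funext j; ring
      rw [hfun, Summable.tsum_add (hjr.add hrs) (hjrt.add hrts), Summable.tsum_add hjr hrs, Summable.tsum_add hjrt hrts]
    rw [h2, hrS.2.2, hrtS.2.2] at h1
    linarith [h1, hjrM, hjrtM]
  have hHsqQ : ∑' j, (zbar L k j r - zbar L k j rt) ^ 2 ≤ K₂ * Q := by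
    have h1 := Summable.tsum_le_tsum key hHsq hgs
    have h2 : ∑' j, g j = (4 * K₁ ^ 2 * Q) * (∑' j : ℕ, ((j : ℝ) + 1) * (r j ^ 2 + rt j ^ 2))
        + (8 * K₁ ^ 2) * Q := by
      rw [hg, Summable.tsum_add (hS1.mul_left _) (hd2.mul_left _), tsum_mul_left, tsum_mul_left, hQdef]
    rw [h2] at h1
    have h3 : (4 * K₁ ^ 2 * Q) * (∑' j : ℕ, ((j : ℝ) + 1) * (r j ^ 2 + rt j ^ 2))
        ≤ (4 * K₁ ^ 2 * Q) * (2 * (M + 1)) :=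
      mul_le_mul_of_nonneg_left hS1sum (by positivity)
    calc ∑' j, (zbar L k j r - zbar L k j rt) ^ 2
        ≤ (4 * K₁ ^ 2 * Q) * (2 * (M + 1)) + (8 * K₁ ^ 2) * Q := by linarith [h1, h3]
      _ = K₂ * Q := by rw [hK₂]; ring
  -- shifted zbar sequence
  set Hsq : ℕ → ℝ := fun j => (zbar L k j r - zbar L k j rt) ^ 2 with hHsqdef
  set Hsq' : ℕ → ℝ := fun j => if j = 0 then 0 else (zbar L k (j - 1) r - zbar L k (j - 1) rt) ^ 2
    with hHsq'def
  have hshift : (fun j : ℕ => Hsq' (j + 1)) = Hsq := by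
    funext j; rw [hHsq'def, hHsqdef]; simp
  have hHsq'S : Summable Hsq' := by
    refine (summable_nat_add_iff 1).mp ?_
    rw [hshift]; exact hHsq
  have hHsq'sum : ∑' j, Hsq' j = ∑' j, Hsq j := by
    rw [Summable.tsum_eq_zero_add hHsq'S]
    have h0 : Hsq' 0 = 0 := by rw [hHsq'def]; simp
    rw [h0, zero_add]
    exact tsum_congr fun j => by rw [← hshift]
  -- shifted differences
  have hd2shift : Summable (fun j : ℕ => (r (j + 1) - rt (j + 1)) ^ 2) :=
    (summable_nat_add_iff 1).2 hd2
  have hd2shiftsum : ∑' j : ℕ, (r (j + 1) - rt (j + 1)) ^ 2 ≤ Q := by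
    have := Summable.sum_add_tsum_nat_add (f := fun j => (r j - rt j) ^ 2) 1 hd2
    rw [hQdef]
    have h0 : 0 ≤ ∑ i ∈ Finset.range 1, (r i - rt i) ^ 2 :=
      Finset.sum_nonneg fun i _ => sq_nonneg _
    linarith [this, h0]
  -- the majorant for F differences
  set mm : ℕ → ℝ := fun j => (4 * (lam * Lf) ^ 2) * (Hsq' j + Hsq j)
      + (4 * (k : ℝ) ^ 2) * ((r (j + 1) - rt (j + 1)) ^ 2 + (r j - rt j) ^ 2) with hmm
  have hmmS : Summable mm := by
    rw [hmm]
    exact ((hHsq'S.add hHsq).mul_left _).add ((hd2shift.add hd2).mul_left _)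
  have hpoint : ∀ j : ℕ, (Fmap L k lam r j - Fmap L k lam rt j) ^ 2 ≤ mm j := by
    intro j
    cases j with
    | zero =>
      have hF : Fmap L k lam r 0 - Fmap L k lam rt 0 =
          (-(lam * Lf) * (zbar L k 0 r - zbar L k 0 rt)) + 0
            + ((k : ℝ) * (r 1 - rt 1)) + 0 := by
        simp only [Fmap, hLf]; ring
      have hm0 : mm 0 = (4 * (lam * Lf) ^ 2) * (0 + Hsq 0)
          + (4 * (k : ℝ) ^ 2) * ((r 1 - rt 1) ^ 2 + (r 0 - rt 0) ^ 2) := by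
        rw [hmm]; simp only []
        rw [hHsq'def]; norm_num
      rw [hF, hm0]
      have := four_sq_le (-(lam * Lf) * (zbar L k 0 r - zbar L k 0 rt)) 0
        ((k : ℝ) * (r 1 - rt 1)) 0
      have h1 : (-(lam * Lf) * (zbar L k 0 r - zbar L k 0 rt)) + 0
          + ((k : ℝ) * (r 1 - rt 1)) + 0
          = (-(lam * Lf) * (zbar L k 0 r - zbar L k 0 rt)) + 0
          + ((k : ℝ) * (r 1 - rt 1)) + 0 := rfl
      refine this.trans ?_
      rw [hHsqdef]
      simp only []
      nlinarith [sq_nonneg ((k : ℝ) * (r 0 - rt 0))]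
    | succ j =>
      have hF : Fmap L k lam r (j + 1) - Fmap L k lam rt (j + 1) =
          (lam * Lf * (zbar L k j r - zbar L k j rt))
            + (-(lam * Lf * (zbar L k (j + 1) r - zbar L k (j + 1) rt)))
            + ((k : ℝ) * (r (j + 2) - rt (j + 2)))
            + (-((k : ℝ) * (r (j + 1) - rt (j + 1)))) := by
        simp only [Fmap, hLf]; ring
      have hm1 : mm (j + 1) = (4 * (lam * Lf) ^ 2) * (Hsq j + Hsq (j + 1))
          + (4 * (k : ℝ) ^ 2) * ((r (j + 2) - rt (j + 2)) ^ 2 + (r (j + 1) - rt (j + 1)) ^ 2) := by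
        rw [hmm]; simp only []
        rw [hHsq'def, hHsqdef]; norm_num
      rw [hF, hm1, hHsqdef]
      have := four_sq_le (lam * Lf * (zbar L k j r - zbar L k j rt))
        (-(lam * Lf * (zbar L k (j + 1) r - zbar L k (j + 1) rt)))
        ((k : ℝ) * (r (j + 2) - rt (j + 2)))
        (-((k : ℝ) * (r (j + 1) - rt (j + 1))))
      refine this.trans (le_of_eq ?_)
      simp only []
      ring
  have hφS : Summable (fun j => (Fmap L k lam r j - Fmap L k lam rt j) ^ 2) :=
    Summable.of_nonneg_of_le (fun j => sq_nonneg _) hpoint hmmS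
  have htotal : ∑' j, (Fmap L k lam r j - Fmap L k lam rt j) ^ 2 ≤ Cc * Q := by
    have h1 := Summable.tsum_le_tsum hpoint hφS hmmS
    have h2 : ∑' j, mm j = (4 * (lam * Lf) ^ 2) * (∑' j, Hsq' j + ∑' j, Hsq j)
        + (4 * (k : ℝ) ^ 2) * ((∑' j : ℕ, (r (j + 1) - rt (j + 1)) ^ 2) + Q) := by
      rw [hmm, Summable.tsum_add ((hHsq'S.add hHsq).mul_left _) ((hd2shift.add hd2).mul_left _),
        tsum_mul_left, tsum_mul_left, Summable.tsum_add hHsq'S hHsq, Summable.tsum_add hd2shift hd2, hQdef]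
    rw [h2, hHsq'sum] at h1
    have h3 : ∑' j, Hsq j ≤ K₂ * Q := hHsqQ
    have h4 := hd2shiftsum
    rw [hCc]
    nlinarith [h1, h3, h4, hQ0, hK₂0, sq_nonneg (lam * Lf), hkR]
  calc Real.sqrt (∑' j, (Fmap L k lam r j - Fmap L k lam rt j) ^ 2)
      ≤ Real.sqrt (Cc * Q) := Real.sqrt_le_sqrt htotal
    _ = Real.sqrt Cc * Real.sqrt Q := Real.sqrt_mul (le_of_lt hCc0) Q
end
end
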